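/- arXiv:2412.17193 — 4 statements merged into one kernel-verified Lean document; each statement's English description precedes it below -/
import Mathlib

section
/- Let i be a nonnegative integer and let σ > 2·4^i. For every δ > 0 there exists ω₀ ∈ ℕ such that for every integer ω ≥ ω₀ there exists a finite sequence of closed intervals in ℝ, each of length at least 1 and less than σ, whose clique number is at most ω, on which the First-Fit coloring uses at least (0.5·(3·(1 − 0.5^i) + 1.5·0.5^i) − δ)·ω colors. -/
set_option maxHeartbeats 1000000

/-- Auxiliary definition of the First-Fit coloring of a sequence of closed
intervals: `firstFitAux x k` is the coloring of the first `k` intervals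
(and `0` on the rest). Interval `i` gets the least positive integer not used
on an earlier interval intersecting it. -/
noncomputable def firstFitAux {n : ℕ} (x : Fin n → ℝ × ℝ) : ℕ → Fin n → ℕ
  | 0 => fun _ => 0
  | k + 1 => fun i =>
      if i.1 = k then
        sInf {c : ℕ | 1 ≤ c ∧ ∀ j : Fin n, j < i →
          (Set.Icc (x j).1 (x j).2 ∩ Set.Icc (x i).1 (x i).2).Nonempty →
          firstFitAux x k j ≠ c}
      else firstFitAux x k i

/-- The First-Fit coloring of a finite sequence of closed intervals. -/
noncomputable def firstFit {n : ℕ} (x : Fin n → ℝ × ℝ) (i : Fin n) : ℕ :=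
  firstFitAux x (i.1 + 1) i

lemma firstFitAux_stable {n : ℕ} (x : Fin n → ℝ × ℝ) :
    ∀ k (j : Fin n), j.1 < k → firstFitAux x k j = firstFit x j := by
  intro k
  induction k with
  | zero => intro j hj; omega
  | succ k ih =>
    intro j hj
    by_cases h : j.1 = k
    · subst h
      show firstFitAux x (j.1+1) j = _
      rfl
    · have hj' : j.1 < k := by omega
      have : firstFitAux x (k+1) j = firstFitAux x k j := by
        show (if j.1 = k then _ else firstFitAux x k j) = _
        rw [if_neg h]
      rw [this, ih j hj']

lemma firstFit_eq_sInf {n : ℕ} (x : Fin n → ℝ × ℝ) (i : Fin n) :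
    firstFit x i = sInf {c : ℕ | 1 ≤ c ∧ ∀ j : Fin n, j < i →
      (Set.Icc (x j).1 (x j).2 ∩ Set.Icc (x i).1 (x i).2).Nonempty →
      firstFit x j ≠ c} := by
  show firstFitAux x (i.1 + 1) i = _
  have : firstFitAux x (i.1 + 1) i =
      sInf {c : ℕ | 1 ≤ c ∧ ∀ j : Fin n, j < i →
      (Set.Icc (x j).1 (x j).2 ∩ Set.Icc (x i).1 (x i).2).Nonempty →
      firstFitAux x i.1 j ≠ c} := by
    show (if i.1 = i.1 then _ else _) = _
    rw [if_pos rfl]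
  rw [this]
  congr 1
  ext c
  simp only [Set.mem_setOf_eq, and_congr_right_iff]
  intro _
  constructor
  · intro h j hj hadj
    rw [← firstFitAux_stable x i.1 j hj]
    exact h j hj hadj
  · intro h j hj hadj
    rw [firstFitAux_stable x i.1 j hj]
    exact h j hj hadj

/-- If `g` is a coloring such that each `g i` is the least admissible color
w.r.t. `g` on earlier neighbors, then `firstFit = g`. -/
lemma firstFit_eq_of_greedy {n : ℕ} (x : Fin n → ℝ × ℝ) (g : Fin n → ℕ)
    (h1 : ∀ i, 1 ≤ g i)
    (h2 : ∀ i j : Fin n, j < i →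
      (Set.Icc (x j).1 (x j).2 ∩ Set.Icc (x i).1 (x i).2).Nonempty → g j ≠ g i)
    (h3 : ∀ i : Fin n, ∀ c, 1 ≤ c → c < g i → ∃ j : Fin n, j < i ∧
      (Set.Icc (x j).1 (x j).2 ∩ Set.Icc (x i).1 (x i).2).Nonempty ∧ g j = c) :
    ∀ i, firstFit x i = g i := by
  have key : ∀ m (i : Fin n), i.1 = m → firstFit x i = g i := by
    intro m
    induction m using Nat.strong_induction_on with
    | _ m ih =>
      intro i him
      rw [firstFit_eq_sInf]
      have hmem : g i ∈ {c : ℕ | 1 ≤ c ∧ ∀ j : Fin n, j < i →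
          (Set.Icc (x j).1 (x j).2 ∩ Set.Icc (x i).1 (x i).2).Nonempty →
          firstFit x j ≠ c} := by
        refine ⟨h1 i, fun j hj hadj => ?_⟩
        rw [ih j.1 (by omega : j.1 < m) j rfl]
        exact h2 i j hj hadj
      refine le_antisymm (Nat.sInf_le hmem) ?_
      refine le_csInf ⟨_, hmem⟩ ?_
      intro c hc
      by_contra hlt
      push_neg at hlt
      obtain ⟨hc1, hc2⟩ := hc
      obtain ⟨j, hj, hadj, hgj⟩ := h3 i c hc1 hlt
      exact hc2 j hj hadj (by rw [ih j.1 (by omega : j.1 < m) j rfl]; exact hgj)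
  intro i; exact key i.1 i rfl


abbrev TI := ℝ × ℝ × ℕ

def Adj (e f : TI) : Prop :=
  (Set.Icc e.1 e.2.1 ∩ Set.Icc f.1 f.2.1).Nonempty

lemma adj_iff {e f : TI} : Adj e f ↔ max e.1 f.1 ≤ min e.2.1 f.2.1 := by
  rw [Adj, Set.Icc_inter_Icc, Set.nonempty_Icc]

lemma adj_comm {e f : TI} : Adj e f ↔ Adj f e := by
  rw [adj_iff, adj_iff, max_comm, min_comm]

def ValidFrom : List TI → List TI → Prop
  | _, [] => True
  | D, e :: l => 1 ≤ e.2.2 ∧ (∀ f ∈ D, Adj f e → f.2.2 ≠ e.2.2) ∧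
      (∀ c, 1 ≤ c → c < e.2.2 → ∃ f ∈ D, Adj f e ∧ f.2.2 = c) ∧
      ValidFrom (e :: D) l

lemma validFrom_congr {D₁ D₂ : List TI} (h : ∀ f, f ∈ D₁ ↔ f ∈ D₂) :
    ∀ {l : List TI}, ValidFrom D₁ l → ValidFrom D₂ l := by
  intro l
  induction l generalizing D₁ D₂ with
  | nil => intro _; trivial
  | cons e l ih =>
    rintro ⟨p1, p2, p3, p4⟩
    refine ⟨p1, fun f hf => p2 f ((h f).2 hf), fun c hc1 hc2 => ?_, ?_⟩
    · obtain ⟨f, hf, hA, hc⟩ := p3 c hc1 hc2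
      exact ⟨f, (h f).1 hf, hA, hc⟩
    · exact ih (fun f => by simp [h f]) p4

lemma validFrom_append {D l₁ l₂ : List TI} :
    ValidFrom D l₁ → ValidFrom (l₁ ++ D) l₂ → ValidFrom D (l₁ ++ l₂) := by
  induction l₁ generalizing D with
  | nil => intro _ h2; simpa using h2
  | cons e l ih =>
    rintro ⟨p1, p2, p3, p4⟩ h2
    refine ⟨p1, p2, p3, ih p4 (validFrom_congr (fun f => by simp; tauto) h2)⟩

/-- Weakening: extra earlier intervals are fine as long as they don't clash. -/
lemma validFrom_extend {E D : List TI} {l : List TI}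
    (hE : ∀ f ∈ E, ∀ e ∈ l, Adj f e → f.2.2 ≠ e.2.2) :
    ValidFrom D l → ValidFrom (E ++ D) l := by
  induction l generalizing D with
  | nil => intro _; trivial
  | cons e l ih =>
    rintro ⟨p1, p2, p3, p4⟩
    refine ⟨p1, ?_, ?_, ?_⟩
    · intro f hf hA
      rcases List.mem_append.1 hf with h | h
      · exact hE f h e (by simp) hA
      · exact p2 f h hA
    · intro c hc1 hc2
      obtain ⟨f, hf, hA, hc⟩ := p3 c hc1 hc2
      exact ⟨f, List.mem_append.2 (Or.inr hf), hA, hc⟩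
    · have := ih (D := e :: D) (fun f hf e' he' => hE f hf e' (by simp [he'])) p4
      exact validFrom_congr (fun f => by simp; tauto) this

lemma validFrom_spec {l : List TI} :
    ∀ {D : List TI}, ValidFrom D l → ∀ b (hb : b < l.length),
      1 ≤ (l.get ⟨b, hb⟩).2.2 ∧
      (∀ f, (f ∈ D ∨ ∃ a, ∃ ha : a < l.length, a < b ∧ l.get ⟨a, ha⟩ = f) →
        Adj f (l.get ⟨b, hb⟩) → f.2.2 ≠ (l.get ⟨b, hb⟩).2.2) ∧
      (∀ c, 1 ≤ c → c < (l.get ⟨b, hb⟩).2.2 →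
        ∃ f, (f ∈ D ∨ ∃ a, ∃ ha : a < l.length, a < b ∧ l.get ⟨a, ha⟩ = f) ∧
          Adj f (l.get ⟨b, hb⟩) ∧ f.2.2 = c) := by
  induction l with
  | nil => intro D _ b hb; simp at hb
  | cons e l ih =>
    rintro D ⟨p1, p2, p3, p4⟩ b hb
    cases b with
    | zero =>
      refine ⟨p1, ?_, ?_⟩
      · intro f hf hA
        rcases hf with h | ⟨a, ha, ha0, _⟩
        · exact p2 f h hA
        · omega
      · intro c hc1 hc2
        obtain ⟨f, hf, hA, hc⟩ := p3 c hc1 hc2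
        exact ⟨f, Or.inl hf, hA, hc⟩
    | succ b =>
      have hb' : b < l.length := by simpa using hb
      obtain ⟨q1, q2, q3⟩ := ih p4 b hb'
      have hmem : ∀ f, (f ∈ e :: D ∨ ∃ a, ∃ ha : a < l.length, a < b ∧ l.get ⟨a, ha⟩ = f)
          ↔ (f ∈ D ∨ ∃ a, ∃ ha : a < (e :: l).length, a < b + 1 ∧ (e :: l).get ⟨a, ha⟩ = f) := by
        intro f
        constructor
        · rintro (h | ⟨a, ha, hab, rfl⟩)
          · rcases List.mem_cons.1 h with h | h
            · exact Or.inr ⟨0, by simp, by omega, h.symm⟩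
            · exact Or.inl h
          · exact Or.inr ⟨a + 1, by simpa using Nat.succ_lt_succ ha, by omega, rfl⟩
        · rintro (h | ⟨a, ha, hab, rfl⟩)
          · exact Or.inl (List.mem_cons.2 (Or.inr h))
          · cases a with
            | zero => exact Or.inl (by simp)
            | succ a =>
              exact Or.inr ⟨a, by simpa using Nat.succ_lt_succ_iff.1 ha, by omega, rfl⟩
      refine ⟨q1, ?_, ?_⟩
      · intro f hf hA
        exact q2 f ((hmem f).2 hf) hA
      · intro c hc1 hc2
        obtain ⟨f, hf, hA, hc⟩ := q3 c hc1 hc2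
        exact ⟨f, (hmem f).1 hf, hA, hc⟩

/-- The sequence of intervals associated to a list of colored intervals. -/
def seqOf (l : List TI) : Fin l.length → ℝ × ℝ :=
  fun j => ((l.get j).1, (l.get j).2.1)

lemma firstFit_seqOf {l : List TI} (h : ValidFrom [] l) :
    ∀ j : Fin l.length, firstFit (seqOf l) j = (l.get j).2.2 := by
  apply firstFit_eq_of_greedy
  · intro i; exact (validFrom_spec h i.1 i.2).1
  · intro i j hj hadj
    refine (validFrom_spec h i.1 i.2).2.1 (l.get j) ?_ ?_
    · exact Or.inr ⟨j.1, j.2, hj, rfl⟩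
    · exact hadj
  · intro i c hc1 hc2
    obtain ⟨f, hf, hA, hc⟩ := (validFrom_spec h i.1 i.2).2.2 c hc1 hc2
    rcases hf with h' | ⟨a, ha, hab, rfl⟩
    · simp at h'
    · exact ⟨⟨a, ha⟩, hab, hA, hc⟩

theorem card_filter_eq_countP {α : Type*} (l : List α) (p : α → Bool) :
    (Finset.univ.filter (fun j : Fin l.length => p (l.get j))).card = l.countP p := by
  induction l with
  | nil => simp
  | cons a l ih =>
    rw [List.countP_cons, Fin.univ_succ, Finset.filter_cons]
    by_cases h : p a
    · rw [if_pos (by simpa using h), Finset.card_cons, Finset.filter_map,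
        Finset.card_map]
      simp only [h, cond_true, if_pos]
      exact congrArg (· + 1) ih
    · rw [if_neg (by simpa using h), Finset.filter_map, Finset.card_map]
      simp only [h, if_neg, cond_false, Bool.false_eq_true, not_false_iff, add_zero]
      exact ih

/-- A stack of `s` copies of `[a,b]` with colors `c0+1, …, c0+s`. -/
def stk (a b : ℝ) (c0 s : ℕ) : List TI := (List.range s).map fun k => (a, b, c0 + k + 1)

def shf (t : ℝ) (l : List TI) : List TI := l.map fun e => (e.1 + t, e.2.1 + t, e.2.2)

lemma mem_stk {e : TI} {a b : ℝ} {c0 s : ℕ} :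
    e ∈ stk a b c0 s ↔ ∃ k, k < s ∧ e = (a, b, c0 + k + 1) := by
  simp [stk, List.mem_map, eq_comm]

lemma mem_shf {e : TI} {t : ℝ} {l : List TI} :
    e ∈ shf t l ↔ ∃ f ∈ l, e = (f.1 + t, f.2.1 + t, f.2.2) := by
  simp [shf, List.mem_map, eq_comm]

lemma length_stk {a b : ℝ} {c0 s : ℕ} : (stk a b c0 s).length = s := by
  simp [stk]

lemma adj_shf {t : ℝ} {e f : TI} :
    Adj (e.1 + t, e.2.1 + t, e.2.2) (f.1 + t, f.2.1 + t, f.2.2) ↔ Adj e f := by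
  rw [adj_iff, adj_iff]
  rw [max_add_add_right, min_add_add_right]
  exact add_le_add_iff_right t

lemma validFrom_shf {t : ℝ} {D l : List TI} (h : ValidFrom D l) :
    ValidFrom (shf t D) (shf t l) := by
  induction l generalizing D with
  | nil => trivial
  | cons e l ih =>
    obtain ⟨p1, p2, p3, p4⟩ := h
    refine ⟨p1, ?_, ?_, ?_⟩
    · intro f hf hA
      rw [mem_shf] at hf
      obtain ⟨g, hg, rfl⟩ := hf
      exact p2 g hg (adj_shf.1 hA)
    · intro c hc1 hc2
      obtain ⟨f, hf, hA, hc⟩ := p3 c hc1 hc2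
      exact ⟨(f.1 + t, f.2.1 + t, f.2.2), mem_shf.2 ⟨f, hf, rfl⟩, adj_shf.2 hA, hc⟩
    · exact ih p4

lemma stk_succ {a b : ℝ} {c0 s : ℕ} :
    stk a b c0 (s+1) = stk a b c0 s ++ [(a, b, c0 + s + 1)] := by
  simp [stk, List.range_succ]

lemma stk_valid {D : List TI} {a b : ℝ} {c0 : ℕ} (s : ℕ)
    (hab : a ≤ b)
    (hcols : ∀ f ∈ D, max f.1 a ≤ min f.2.1 b → f.2.2 ≤ c0)
    (hwit : ∀ c, 1 ≤ c → c ≤ c0 → ∃ f ∈ D, max f.1 a ≤ min f.2.1 b ∧ f.2.2 = c) :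
    ValidFrom D (stk a b c0 s) := by
  induction s with
  | zero => trivial
  | succ s ih =>
    rw [stk_succ]
    refine validFrom_append ih ?_
    refine ⟨(show 1 ≤ c0 + s + 1 by omega : 1 ≤ c0+s+1), ?_, ?_, trivial⟩
    · intro f hf hA
      rcases List.mem_append.1 hf with h | h
      · rw [mem_stk] at h
        obtain ⟨k, hk, rfl⟩ := h
        show c0 + k + 1 ≠ c0 + s + 1
        omega
      · have := hcols f h (adj_iff.1 hA)
        show f.2.2 ≠ c0 + s + 1
        omega
    · intro c hc1 hc2
      have hc2' : c < c0 + s + 1 := hc2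
      by_cases hc : c ≤ c0
      · obtain ⟨f, hf, hA, hfc⟩ := hwit c hc1 hc
        exact ⟨f, List.mem_append.2 (Or.inr hf), adj_iff.2 hA, hfc⟩
      · replace hc2 := hc2'
        push_neg at hc
        refine ⟨(a, b, c), List.mem_append.2 (Or.inl (mem_stk.2 ⟨c - c0 - 1, by omega, by
            simp; omega⟩)), adj_iff.2 (by simp [hab]), rfl⟩

noncomputable def cnt (t : ℝ) (l : List TI) : ℕ :=
  l.countP fun e => decide (e.1 ≤ t ∧ t ≤ e.2.1)

lemma cnt_append {t : ℝ} {l₁ l₂ : List TI} : cnt t (l₁ ++ l₂) = cnt t l₁ + cnt t l₂ :=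
  List.countP_append

lemma cnt_le_length {t : ℝ} {l : List TI} : cnt t l ≤ l.length :=
  List.countP_le_length

lemma cnt_eq_zero {t : ℝ} {l : List TI} (h : ∀ e ∈ l, ¬(e.1 ≤ t ∧ t ≤ e.2.1)) :
    cnt t l = 0 := by
  rw [cnt, List.countP_eq_zero]
  intro e he
  simpa using h e he

lemma cnt_shf {t s : ℝ} {l : List TI} : cnt t (shf s l) = cnt (t - s) l := by
  rw [cnt, shf, List.countP_map, cnt]
  apply List.countP_congr
  intro e _
  have h : (e.1 + s ≤ t ∧ t ≤ e.2.1 + s) ↔ (e.1 ≤ t - s ∧ t - s ≤ e.2.1) := by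
    constructor
    · rintro ⟨h1, h2⟩; constructor <;> linarith
    · rintro ⟨h1, h2⟩; constructor <;> linarith
  simpa using h

def Cnum : ℕ → ℕ → ℕ
  | 0, u => 2*u
  | (j+1), u => Cnum j u + 3 * (2^j * u)

noncomputable def gad : ℕ → ℕ → List TI
  | 0, u => stk 0 1 0 (2*u)
  | (j+1), u =>
    let s := 2^j * u
    let C := Cnum j u
    let P : ℝ := 4^(j+1)
    gad j u ++ shf P (gad j u) ++ shf (2*P) (gad j u) ++
    (stk 0 P C s ++ stk (2*P) (3*P) C s ++
     stk (P/5) (6*P/5) (C+s) s ++ stk (11*P/10) (29*P/10) (C+2*s) s)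

lemma Q_pos (j : ℕ) : (0:ℝ) < 4^j := by positivity
lemma Q_ge_one (j : ℕ) : (1:ℝ) ≤ 4^j := one_le_pow₀ (by norm_num)

lemma gad_span (j u : ℕ) : ∀ e ∈ gad j u,
    0 ≤ e.1 ∧ e.2.1 ≤ 3 * 4^j ∧ 1 ≤ e.2.1 - e.1 ∧ e.2.1 - e.1 ≤ 9/5 * 4^j := by
  induction j with
  | zero =>
    intro e he
    rw [gad, mem_stk] at he
    obtain ⟨k, hk, rfl⟩ := he
    norm_num
  | succ j ih =>
    intro e he
    have h1 : (1:ℝ) ≤ 4^j := Q_ge_one j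
    have hP : (4:ℝ)^(j+1) = 4 * 4^j := by rw [pow_succ]; ring
    rw [gad] at he
    simp only [List.mem_append] at he
    rcases he with (((h | h) | h) | (((h | h) | h) | h))
    · obtain ⟨h1', h2', h3', h4'⟩ := ih e h
      refine ⟨h1', by nlinarith, h3', by nlinarith⟩
    · rw [mem_shf] at h
      obtain ⟨f, hf, rfl⟩ := h
      obtain ⟨h1', h2', h3', h4'⟩ := ih f hf
      try dsimp only
      refine ⟨by nlinarith, by nlinarith, by nlinarith, by nlinarith⟩
    · rw [mem_shf] at h
      obtain ⟨f, hf, rfl⟩ := h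
      obtain ⟨h1', h2', h3', h4'⟩ := ih f hf
      try dsimp only
      refine ⟨by nlinarith, by nlinarith, by nlinarith, by nlinarith⟩
    · rw [mem_stk] at h
      obtain ⟨k, hk, rfl⟩ := h
      try dsimp only
      refine ⟨le_refl 0, by nlinarith, by nlinarith, by nlinarith⟩
    · rw [mem_stk] at h
      obtain ⟨k, hk, rfl⟩ := h
      try dsimp only
      refine ⟨by nlinarith, by nlinarith, by nlinarith, by nlinarith⟩
    · rw [mem_stk] at h
      obtain ⟨k, hk, rfl⟩ := h
      try dsimp only
      refine ⟨by nlinarith, by nlinarith, by nlinarith, by nlinarith⟩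
    · rw [mem_stk] at h
      obtain ⟨k, hk, rfl⟩ := h
      try dsimp only
      refine ⟨by nlinarith, by nlinarith, by nlinarith, by nlinarith⟩

lemma Cnum_eq (j u : ℕ) : Cnum j u + 3 * (2^j * u) = Cnum (j+1) u := rfl

lemma gad_col_le (j u : ℕ) : ∀ e ∈ gad j u, 1 ≤ e.2.2 ∧ e.2.2 ≤ Cnum j u := by
  induction j with
  | zero =>
    intro e he
    rw [gad, mem_stk] at he
    obtain ⟨k, hk, rfl⟩ := he
    show 1 ≤ 0 + k + 1 ∧ 0 + k + 1 ≤ Cnum 0 u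
    rw [Cnum]; omega
  | succ j ih =>
    intro e he
    rw [gad] at he
    simp only [List.mem_append] at he
    have hC : Cnum (j+1) u = Cnum j u + 3 * (2^j * u) := rfl
    rcases he with (((h | h) | h) | (((h | h) | h) | h))
    · have := ih e h; omega
    · rw [mem_shf] at h
      obtain ⟨f, hf, rfl⟩ := h
      have := ih f hf
      show 1 ≤ f.2.2 ∧ f.2.2 ≤ _
      omega
    · rw [mem_shf] at h
      obtain ⟨f, hf, rfl⟩ := h
      have := ih f hf
      show 1 ≤ f.2.2 ∧ f.2.2 ≤ _
      omega
    all_goals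
      rw [mem_stk] at h
      obtain ⟨k, hk, rfl⟩ := h
      try dsimp only
      omega

lemma gad_col_surj (j u : ℕ) : ∀ c, 1 ≤ c → c ≤ Cnum j u → ∃ e ∈ gad j u, e.2.2 = c := by
  induction j with
  | zero =>
    intro c hc1 hc2
    rw [Cnum] at hc2
    exact ⟨(0, 1, c), mem_stk.2 ⟨c - 1, by omega, by norm_num; omega⟩, rfl⟩
  | succ j ih =>
    intro c hc1 hc2
    have hC : Cnum (j+1) u = Cnum j u + 3 * (2^j * u) := rfl
    rw [gad]
    simp only [List.mem_append]
    set s := 2^j * u with hs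
    set C := Cnum j u with hCd
    by_cases h0 : c ≤ C
    · obtain ⟨e, he, hec⟩ := ih c hc1 h0
      exact ⟨e, by tauto, hec⟩
    push_neg at h0
    by_cases h1 : c ≤ C + s
    · refine ⟨(0, (4:ℝ)^(j+1), c), ?_, rfl⟩
      have : (0, (4:ℝ)^(j+1), c) ∈ stk 0 ((4:ℝ)^(j+1)) C s :=
        mem_stk.2 ⟨c - C - 1, by omega, by norm_num; omega⟩
      tauto
    push_neg at h1
    by_cases h2 : c ≤ C + 2*s
    · refine ⟨((4:ℝ)^(j+1)/5, 6*(4:ℝ)^(j+1)/5, c), ?_, rfl⟩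
      have : ((4:ℝ)^(j+1)/5, 6*(4:ℝ)^(j+1)/5, c) ∈ stk ((4:ℝ)^(j+1)/5) (6*(4:ℝ)^(j+1)/5) (C+s) s :=
        mem_stk.2 ⟨c - (C+s) - 1, by omega, by norm_num; omega⟩
      tauto
    push_neg at h2
    · refine ⟨(11*(4:ℝ)^(j+1)/10, 29*(4:ℝ)^(j+1)/10, c), ?_, rfl⟩
      have : (11*(4:ℝ)^(j+1)/10, 29*(4:ℝ)^(j+1)/10, c)
          ∈ stk (11*(4:ℝ)^(j+1)/10) (29*(4:ℝ)^(j+1)/10) (C+2*s) s :=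
        mem_stk.2 ⟨c - (C+2*s) - 1, by omega, by norm_num; omega⟩
      tauto

lemma cnt_stk_le {t : ℝ} {a b : ℝ} {c0 s : ℕ} : cnt t (stk a b c0 s) ≤ s :=
  le_trans cnt_le_length (le_of_eq length_stk)

lemma cnt_stk_zero {t : ℝ} {a b : ℝ} {c0 s : ℕ} (h : ¬(a ≤ t ∧ t ≤ b)) :
    cnt t (stk a b c0 s) = 0 := by
  apply cnt_eq_zero
  intro e he
  rw [mem_stk] at he
  obtain ⟨k, hk, rfl⟩ := he
  exact h

lemma cnt_gad_zero {j u : ℕ} {t : ℝ} (h : t < 0 ∨ 3 * 4^j < t) :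
    cnt t (gad j u) = 0 := by
  apply cnt_eq_zero
  intro e he hmem
  obtain ⟨h1, h2, h3, _⟩ := gad_span j u e he
  rcases h with h | h
  · nlinarith [hmem.1, hmem.2]
  · nlinarith [hmem.1, hmem.2]

lemma gad_cnt (j u : ℕ) (t : ℝ) : cnt t (gad j u) ≤ 2^(j+1) * u := by
  induction j generalizing t with
  | zero =>
    rw [gad]
    calc cnt t (stk 0 1 0 (2*u)) ≤ 2*u := cnt_stk_le
    _ ≤ 2^(0+1) * u := by norm_num
  | succ j ih =>
    have h1 : (1:ℝ) ≤ 4^j := Q_ge_one j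
    have hP : (4:ℝ)^(j+1) = 4 * 4^j := by rw [pow_succ]; ring
    rw [gad]
    simp only [cnt_append, cnt_shf]
    set P : ℝ := 4^(j+1) with hPd
    set s := 2^j * u with hs
    have hcopies : cnt t (gad j u) + cnt (t - P) (gad j u) + cnt (t - 2*P) (gad j u)
        ≤ 2^(j+1) * u := by
      rcases lt_trichotomy t P with h | h | h
      · have z1 : cnt (t - P) (gad j u) = 0 := cnt_gad_zero (Or.inl (by nlinarith))
        have z2 : cnt (t - 2*P) (gad j u) = 0 := cnt_gad_zero (Or.inl (by nlinarith))
        rw [z1, z2]; simpa using ih t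
      · have z0 : cnt t (gad j u) = 0 := cnt_gad_zero (Or.inr (by nlinarith))
        have z2 : cnt (t - 2*P) (gad j u) = 0 := cnt_gad_zero (Or.inl (by nlinarith))
        rw [z0, z2]; simpa using ih (t - P)
      · rcases lt_trichotomy t (2*P) with h' | h' | h'
        · have z0 : cnt t (gad j u) = 0 := cnt_gad_zero (Or.inr (by nlinarith))
          have z2 : cnt (t - 2*P) (gad j u) = 0 := cnt_gad_zero (Or.inl (by nlinarith))
          rw [z0, z2]; simpa using ih (t - P)
        · have z0 : cnt t (gad j u) = 0 := cnt_gad_zero (Or.inr (by nlinarith))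
          have z1 : cnt (t - P) (gad j u) = 0 := cnt_gad_zero (Or.inr (by nlinarith))
          rw [z0, z1]; simpa using ih (t - 2*P)
        · have z0 : cnt t (gad j u) = 0 := cnt_gad_zero (Or.inr (by nlinarith))
          have z1 : cnt (t - P) (gad j u) = 0 := cnt_gad_zero (Or.inr (by nlinarith))
          rw [z0, z1]; simpa using ih (t - 2*P)
    have hstacks : cnt t (stk 0 P (Cnum j u) s) + cnt t (stk (2*P) (3*P) (Cnum j u) s)
        + cnt t (stk (P/5) (6*P/5) (Cnum j u + s) s)
        + cnt t (stk (11*P/10) (29*P/10) (Cnum j u + 2*s) s) ≤ 2 * s := by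
      have hP0 : (0:ℝ) < P := by rw [hPd]; positivity
      by_cases hA : t ≤ P
      · have zB : cnt t (stk (2*P) (3*P) (Cnum j u) s) = 0 :=
          cnt_stk_zero (by intro ⟨a, b⟩; nlinarith)
        have zT : cnt t (stk (11*P/10) (29*P/10) (Cnum j u + 2*s) s) = 0 :=
          cnt_stk_zero (by intro ⟨a, b⟩; nlinarith)
        rw [zB, zT]
        have := cnt_stk_le (t := t) (a := (0:ℝ)) (b := P) (c0 := Cnum j u) (s := s)
        have := cnt_stk_le (t := t) (a := P/5) (b := 6*P/5) (c0 := Cnum j u + s) (s := s)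
        omega
      · push_neg at hA
        have zA : cnt t (stk 0 P (Cnum j u) s) = 0 :=
          cnt_stk_zero (by intro ⟨a, b⟩; nlinarith)
        by_cases hM : t ≤ 6*P/5
        · have zB : cnt t (stk (2*P) (3*P) (Cnum j u) s) = 0 :=
            cnt_stk_zero (by intro ⟨a, b⟩; nlinarith)
          rw [zA, zB]
          have := cnt_stk_le (t := t) (a := P/5) (b := 6*P/5) (c0 := Cnum j u + s) (s := s)
          have := cnt_stk_le (t := t) (a := 11*P/10) (b := 29*P/10) (c0 := Cnum j u + 2*s) (s := s)
          omega
        · push_neg at hM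
          have zM : cnt t (stk (P/5) (6*P/5) (Cnum j u + s) s) = 0 :=
            cnt_stk_zero (by intro ⟨a, b⟩; nlinarith)
          rw [zA, zM]
          have := cnt_stk_le (t := t) (a := 2*P) (b := 3*P) (c0 := Cnum j u) (s := s)
          have := cnt_stk_le (t := t) (a := 11*P/10) (b := 29*P/10) (c0 := Cnum j u + 2*s) (s := s)
          omega
    have hfin : 2^(j+1) * u + 2 * s = 2^(j+1+1) * u := by
      rw [hs]; ring
    omega

lemma stk_mem_col {a b : ℝ} {c0 s c : ℕ} (h1 : c0 < c) (h2 : c ≤ c0 + s) :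
    (a, b, c) ∈ stk a b c0 s :=
  mem_stk.2 ⟨c - c0 - 1, by omega, by rw [show c0 + (c - c0 - 1) + 1 = c from by omega]⟩

lemma stk_col_bounds {a b : ℝ} {c0 s : ℕ} :
    ∀ f ∈ stk a b c0 s, c0 + 1 ≤ f.2.2 ∧ f.2.2 ≤ c0 + s := by
  intro f hf
  rw [mem_stk] at hf
  obtain ⟨k, hk, rfl⟩ := hf
  try dsimp only
  omega

lemma gad_valid (j u : ℕ) : ValidFrom [] (gad j u) := by
  induction j with
  | zero =>
    rw [gad]
    apply stk_valid _ (by norm_num)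
    · intro f hf; simp at hf
    · intro c hc1 hc2; omega
  | succ j ih =>
    have h1 : (1:ℝ) ≤ 4^j := Q_ge_one j
    have hP : (4:ℝ)^(j+1) = 4 * 4^j := by rw [pow_succ]; ring
    have hP0 : (0:ℝ) < 4^(j+1) := Q_pos (j+1)
    set P : ℝ := 4^(j+1) with hPd
    set s := 2^j * u with hs
    set C := Cnum j u with hCd
    set G := gad j u with hGd
    have hspan := gad_span j u
    have hcol := gad_col_le j u
    have hsurj := gad_col_surj j u
    rw [gad]
    -- the three copies
    have V1 : ValidFrom [] (G ++ shf P G) := by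
      refine validFrom_append ih ?_
      have h0 : ValidFrom (shf P []) (shf P G) := validFrom_shf ih
      refine validFrom_extend ?_ h0
      intro f hf e he hA
      exfalso
      rw [mem_shf] at he
      obtain ⟨g, hg, rfl⟩ := he
      have h' := adj_iff.1 hA
      simp only [max_le_iff, le_min_iff] at h'
      try dsimp only at h'
      obtain ⟨g1, g2, _, _⟩ := hspan g hg
      obtain ⟨f1, f2, _, _⟩ := hspan f hf
      nlinarith [h'.2.1]
    have V2 : ValidFrom [] (G ++ shf P G ++ shf (2*P) G) := by
      refine validFrom_append V1 ?_
      have h0 : ValidFrom (shf (2*P) []) (shf (2*P) G) := validFrom_shf ih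
      refine validFrom_extend ?_ h0
      intro f hf e he hA
      exfalso
      rw [mem_shf] at he
      obtain ⟨g, hg, rfl⟩ := he
      obtain ⟨g1, g2, _, _⟩ := hspan g hg
      simp only [List.mem_append, List.not_mem_nil, or_false] at hf
      rcases hf with hf | hf
      · have h' := adj_iff.1 hA
        simp only [max_le_iff, le_min_iff] at h'
        try dsimp only at h'
        obtain ⟨f1, f2, _, _⟩ := hspan f hf
        nlinarith [h'.2.1]
      · rw [mem_shf] at hf
        obtain ⟨g', hg', rfl⟩ := hf
        have h' := adj_iff.1 hA
        simp only [max_le_iff, le_min_iff] at h'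
        try dsimp only at h'
        obtain ⟨g1', g2', _, _⟩ := hspan g' hg'
        nlinarith [h'.2.1]
    refine validFrom_append V2 ?_
    set D0 : List TI := G ++ shf P G ++ shf (2*P) G ++ [] with hD0
    have hmemD0 : ∀ f, f ∈ D0 → f ∈ G ∨ f ∈ shf P G ∨ f ∈ shf (2*P) G := by
      intro f hf
      rw [hD0] at hf
      simp only [List.mem_append, List.not_mem_nil, or_false] at hf
      tauto
    have hD0mem : ∀ f, (f ∈ G ∨ f ∈ shf P G ∨ f ∈ shf (2*P) G) → f ∈ D0 := by
      intro f hf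
      rw [hD0]
      simp only [List.mem_append, List.not_mem_nil, or_false]
      tauto
    have hcolD : ∀ f ∈ D0, 1 ≤ f.2.2 ∧ f.2.2 ≤ C := by
      intro f hf
      rcases hmemD0 f hf with hf | hf | hf
      · exact hcol f hf
      · rw [mem_shf] at hf; obtain ⟨g, hg, rfl⟩ := hf; exact hcol g hg
      · rw [mem_shf] at hf; obtain ⟨g, hg, rfl⟩ := hf; exact hcol g hg
    set A := stk 0 P C s with hA
    set B := stk (2*P) (3*P) C s with hB
    set M := stk (P/5) (6*P/5) (C+s) s with hM
    set T := stk (11*P/10) (29*P/10) (C+2*s) s with hT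
    -- stack A
    have VA : ValidFrom D0 A := by
      apply stk_valid _ (by nlinarith)
      · intro f hf _; exact (hcolD f hf).2
      · intro c hc1 hc2
        obtain ⟨e, he, hec⟩ := hsurj c hc1 hc2
        obtain ⟨he1, he2, he3, _⟩ := hspan e he
        refine ⟨e, hD0mem e (Or.inl he), ?_, hec⟩
        simp only [max_le_iff, le_min_iff]
        exact ⟨⟨by nlinarith, by nlinarith⟩, by nlinarith, by nlinarith⟩
    have VB : ValidFrom (A ++ D0) B := by
      apply stk_valid _ (by nlinarith)
      · intro f hf hadj
        rcases List.mem_append.1 hf with hf | hf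
        · exfalso
          rw [hA, mem_stk] at hf
          obtain ⟨k, hk, rfl⟩ := hf
          simp only [max_le_iff, le_min_iff] at hadj
          try dsimp only at hadj
          nlinarith [hadj.2.1]
        · exact (hcolD f hf).2
      · intro c hc1 hc2
        obtain ⟨e, he, hec⟩ := hsurj c hc1 hc2
        obtain ⟨he1, he2, he3, _⟩ := hspan e he
        refine ⟨(e.1 + 2*P, e.2.1 + 2*P, e.2.2),
          List.mem_append.2 (Or.inr (hD0mem _ (Or.inr (Or.inr (mem_shf.2 ⟨e, he, rfl⟩))))),
          ?_, hec⟩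
        simp only [max_le_iff, le_min_iff]
        try dsimp only
        exact ⟨⟨by nlinarith, by nlinarith⟩, by nlinarith, by nlinarith⟩
    have VM : ValidFrom (A ++ B ++ D0) M := by
      apply stk_valid _ (by nlinarith)
      · intro f hf _
        rcases List.mem_append.1 hf with hf | hf
        · rcases List.mem_append.1 hf with hf | hf
          · have := stk_col_bounds f hf; omega
          · have := stk_col_bounds f hf; omega
        · have := (hcolD f hf).2; omega
      · intro c hc1 hc2
        by_cases hcC : c ≤ C
        · obtain ⟨e, he, hec⟩ := hsurj c hc1 hcC
          obtain ⟨he1, he2, he3, _⟩ := hspan e he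
          by_cases hpos : P/5 ≤ e.1
          · refine ⟨e, List.mem_append.2 (Or.inr (hD0mem e (Or.inl he))), ?_, hec⟩
            simp only [max_le_iff, le_min_iff]
            exact ⟨⟨by nlinarith, by nlinarith⟩, by nlinarith, by nlinarith⟩
          · push_neg at hpos
            refine ⟨(e.1 + P, e.2.1 + P, e.2.2),
              List.mem_append.2 (Or.inr (hD0mem _ (Or.inr (Or.inl (mem_shf.2 ⟨e, he, rfl⟩))))),
              ?_, hec⟩
            simp only [max_le_iff, le_min_iff]
            try dsimp only
            exact ⟨⟨by nlinarith, by nlinarith⟩, by nlinarith, by nlinarith⟩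
        · push_neg at hcC
          refine ⟨(0, P, c),
            List.mem_append.2 (Or.inl (List.mem_append.2 (Or.inl (stk_mem_col hcC (by omega))))),
            ?_, rfl⟩
          simp only [max_le_iff, le_min_iff]
          try dsimp only
          exact ⟨⟨by nlinarith, by nlinarith⟩, by nlinarith, by nlinarith⟩
    have VT : ValidFrom (A ++ B ++ M ++ D0) T := by
      apply stk_valid _ (by nlinarith)
      · intro f hf _
        rcases List.mem_append.1 hf with hf | hf
        · rcases List.mem_append.1 hf with hf | hf
          · rcases List.mem_append.1 hf with hf | hf
            · have := stk_col_bounds f hf; omega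
            · have := stk_col_bounds f hf; omega
          · have := stk_col_bounds f hf; omega
        · have := (hcolD f hf).2; omega
      · intro c hc1 hc2
        by_cases hcC : c ≤ C
        · obtain ⟨e, he, hec⟩ := hsurj c hc1 hcC
          obtain ⟨he1, he2, he3, _⟩ := hspan e he
          by_cases hpos : P/10 ≤ e.1
          · refine ⟨(e.1 + P, e.2.1 + P, e.2.2),
              List.mem_append.2 (Or.inr (hD0mem _ (Or.inr (Or.inl (mem_shf.2 ⟨e, he, rfl⟩))))),
              ?_, hec⟩
            simp only [max_le_iff, le_min_iff]
            try dsimp only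
            exact ⟨⟨by nlinarith, by nlinarith⟩, by nlinarith, by nlinarith⟩
          · push_neg at hpos
            refine ⟨(e.1 + 2*P, e.2.1 + 2*P, e.2.2),
              List.mem_append.2 (Or.inr (hD0mem _ (Or.inr (Or.inr (mem_shf.2 ⟨e, he, rfl⟩))))),
              ?_, hec⟩
            simp only [max_le_iff, le_min_iff]
            try dsimp only
            exact ⟨⟨by nlinarith, by nlinarith⟩, by nlinarith, by nlinarith⟩
        · push_neg at hcC
          by_cases hcs : c ≤ C + s
          · refine ⟨(2*P, 3*P, c),
              List.mem_append.2 (Or.inl (List.mem_append.2 (Or.inl (List.mem_append.2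
                (Or.inr (stk_mem_col hcC (by omega))))))),
              ?_, rfl⟩
            simp only [max_le_iff, le_min_iff]
            try dsimp only
            exact ⟨⟨by nlinarith, by nlinarith⟩, by nlinarith, by nlinarith⟩
          · push_neg at hcs
            refine ⟨(P/5, 6*P/5, c),
              List.mem_append.2 (Or.inl (List.mem_append.2 (Or.inr
                (stk_mem_col (by omega) (by omega))))),
              ?_, rfl⟩
            simp only [max_le_iff, le_min_iff]
            try dsimp only
            exact ⟨⟨by nlinarith, by nlinarith⟩, by nlinarith, by nlinarith⟩
    -- assemble
    refine validFrom_append (validFrom_append (validFrom_append VA ?_) ?_) ?_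
    · exact validFrom_congr (fun f => by simp only [List.mem_append, List.not_mem_nil, or_false]; try tauto) VB
    · exact validFrom_congr (fun f => by simp only [List.mem_append, List.not_mem_nil, or_false]; try tauto) VM
    · exact validFrom_congr (fun f => by simp only [List.mem_append, List.not_mem_nil, or_false]; try tauto) VT

lemma Cnum_add (j u : ℕ) : Cnum j u + u = 3 * 2^j * u := by
  induction j with
  | zero => rw [Cnum]; ring
  | succ j ih =>
    rw [Cnum, pow_succ]
    zify at ih ⊢
    linear_combination ih

theorem stmt2 (i : ℕ) (σ : ℝ) (hσ : 2 * 4 ^ i < σ) :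
    ∀ δ : ℝ, 0 < δ → ∃ ω₀ : ℕ, ∀ ω : ℕ, ω₀ ≤ ω →
      ∃ (n : ℕ) (x : Fin n → ℝ × ℝ),
        (∀ j, 1 ≤ (x j).2 - (x j).1 ∧ (x j).2 - (x j).1 < σ) ∧
        (∀ t : ℝ, {j : Fin n | t ∈ Set.Icc (x j).1 (x j).2}.ncard ≤ ω) ∧
        (0.5 * (3 * (1 - 0.5 ^ i) + 1.5 * 0.5 ^ i) - δ) * (ω : ℝ) ≤
          ((Set.range (firstFit x)).ncard : ℝ) := by
  intro δ hδ
  refine ⟨3 * 4^(i+1), fun ω hω => ?_⟩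
  set u := ω / 2^(i+1) with hu
  set l := gad i u with hl
  refine ⟨l.length, seqOf l, ?_, ?_, ?_⟩
  · -- lengths
    intro j
    have hmem : l.get j ∈ l := l.get_mem j
    obtain ⟨_, _, h3, h4⟩ := gad_span i u _ hmem
    refine ⟨h3, lt_of_le_of_lt h4 ?_⟩
    have : (0:ℝ) < 4^i := by positivity
    nlinarith
  · -- clique number
    intro t
    have hcard : {j : Fin l.length | t ∈ Set.Icc ((seqOf l j).1) ((seqOf l j).2)}.ncard
        = cnt t l := by
      classical
      have h1 : {j : Fin l.length | t ∈ Set.Icc ((seqOf l j).1) ((seqOf l j).2)}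
          = ↑(Finset.univ.filter (fun j : Fin l.length =>
              (fun e : TI => decide (e.1 ≤ t ∧ t ≤ e.2.1)) (l.get j))) := by
        ext j
        simp [seqOf, Set.mem_Icc]
      rw [h1, Set.ncard_coe_finset]
      have h2 := card_filter_eq_countP l (fun e : TI => decide (e.1 ≤ t ∧ t ≤ e.2.1))
      exact h2
    rw [hcard]
    calc cnt t l ≤ 2^(i+1) * u := gad_cnt i u t
    _ ≤ ω := by
      rw [hu]
      exact Nat.mul_div_le ω (2^(i+1)) |>.trans (le_refl ω) |>.trans (le_refl ω)
  · -- colors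
    have hff := firstFit_seqOf (gad_valid i u)
    set C := Cnum i u with hC
    have hsub : ∀ c, 1 ≤ c → c ≤ C → c ∈ Set.range (firstFit (seqOf l)) := by
      intro c h1 h2
      obtain ⟨e, he, hec⟩ := gad_col_surj i u c h1 h2
      obtain ⟨k, hk⟩ := List.mem_iff_get.1 he
      exact ⟨k, by rw [hff k, hk, hec]⟩
    have hC_le : (C:ℝ) ≤ ((Set.range (firstFit (seqOf l))).ncard : ℝ) := by
      have hsub' : (↑(Finset.Icc 1 C) : Set ℕ) ⊆ Set.range (firstFit (seqOf l)) := by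
        intro c hc
        simp only [Finset.coe_Icc, Set.mem_Icc] at hc
        exact hsub c hc.1 hc.2
      have hle := Set.ncard_le_ncard hsub' (Set.finite_range _)
      rw [Set.ncard_coe_finset, Nat.card_Icc] at hle
      have : C ≤ (Set.range (firstFit (seqOf l))).ncard := by omega
      exact_mod_cast this
    refine le_trans ?_ hC_le
    -- arithmetic
    have hCu : (C:ℝ) + u = 3 * 2^i * u := by
      have := Cnum_add i u
      exact_mod_cast this
    set y : ℝ := 2^i with hy
    set z : ℝ := (0.5:ℝ)^i with hz
    have hyz : y * z = 1 := by
      rw [hy, hz, ← mul_pow]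
      norm_num
    have hy1 : (1:ℝ) ≤ y := one_le_pow₀ (by norm_num)
    have hz0 : (0:ℝ) ≤ z := by positivity
    have hzdef : (0.5:ℝ)^i = z := rfl
    set K := 2^(i+1) with hK
    have hKr : ω = K * u + ω % K := by
      rw [hu, hK]
      exact (Nat.div_add_mod ω (2^(i+1))).symm ▸ by omega
    have hrlt : ω % K < K := Nat.mod_lt _ (by positivity)
    have hKcast : (K:ℝ) = 2 * y := by
      rw [hK, hy]
      push_cast
      ring
    have homega : (ω:ℝ) = 2 * y * u + (ω % K : ℕ) := by
      have : (ω:ℝ) = (K:ℝ) * u + (ω % K : ℕ) := by exact_mod_cast congrArg (Nat.cast : ℕ → ℝ) hKr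
      rw [this, hKcast]
    have hrle : ((ω % K : ℕ):ℝ) ≤ 2*y - 1 := by
      have : ((ω % K : ℕ):ℝ) ≤ (K:ℝ) - 1 := by
        have := hrlt
        have h' : (ω % K) + 1 ≤ K := this
        have := (Nat.cast_le (α := ℝ)).2 h'
        push_cast at this
        linarith
      rw [hKcast] at this
      linarith
    have homega_ge : (12:ℝ) * y^2 ≤ ω := by
      have h4 : ((3 * 4^(i+1) : ℕ):ℝ) ≤ (ω:ℝ) := by exact_mod_cast hω
      have hy2 : y^2 = (4:ℝ)^i := by
        rw [hy, ← pow_mul, mul_comm, pow_mul]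
        norm_num
      have h4' : ((3 * 4^(i+1) : ℕ):ℝ) = 12 * y^2 := by
        push_cast
        rw [pow_succ, hy2]
        ring
      linarith [h4, h4'.symm.le]
    have hu0 : (0:ℝ) ≤ (u:ℕ) := Nat.cast_nonneg u
    have hr0 : (0:ℝ) ≤ ((ω % K : ℕ):ℝ) := Nat.cast_nonneg _
    have hy0 : (0:ℝ) < y := lt_of_lt_of_le one_pos hy1
    have h2yu : 12*y^2 - (2*y - 1) ≤ 2*y*u := by linarith [homega_ge, homega, hrle]
    have huge : 6*y - 3 ≤ (u:ℝ) := by nlinarith [h2yu, hy0, mul_nonneg hu0 hy0.le]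
    have hzyu : y * z * (u:ℝ) = (u:ℝ) := by rw [hyz, one_mul]
    have hzω : 2*(u:ℝ) ≤ z * ω := by
      have hexp : z * (2*y*(u:ℝ) + ((ω % K : ℕ):ℝ)) = 2*(y*z*(u:ℝ)) + z * ((ω % K : ℕ):ℝ) := by
        ring
      rw [homega, hexp, hzyu]
      have := mul_nonneg hz0 hr0
      linarith
    have hδω : 0 ≤ δ * (ω:ℝ) := mul_nonneg hδ.le (Nat.cast_nonneg ω)
    have hCeq : (C:ℝ) = 3*y*(u:ℝ) - u := by linarith [hCu]
    rw [hCeq]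
    nlinarith [homega, hzω, hδω, hrle, huge, hu0, hr0, hy1, hyz]
end

section
/- For every positive integer k, every real number a, and every proper deterministic online coloring algorithm A with known representation, there exists a finite sequence of closed intervals in ℝ, each of length exactly 1 and each contained in [a, a+3], whose clique number is at most 2k, on which A uses at least 3k colors. -/
/-- A deterministic online coloring algorithm with known representation:
it assigns to each finite sequence of closed intervals a color for the last
interval. -/
def KnownRepAlg : Type := ∀ i : ℕ, (Fin (i + 1) → ℝ × ℝ) → ℕ

/-- The coloring produced when a sequence of intervals is presented to the
algorithm `A` one by one. -/
def knownColoring (A : KnownRepAlg) {n : ℕ} (x : Fin n → ℝ × ℝ) (i : Fin n) : ℕ :=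
  A i.1 (x ∘ Fin.castLE i.isLt)

/-- The algorithm `A` is proper: on every presented sequence of closed
intervals, intersecting intervals receive distinct colors. -/
def IsProperKnown (A : KnownRepAlg) : Prop :=
  ∀ (n : ℕ) (x : Fin n → ℝ × ℝ), (∀ i, (x i).1 ≤ (x i).2) →
    ∀ i j : Fin n, i ≠ j →
      (Set.Icc (x i).1 (x i).2 ∩ Set.Icc (x j).1 (x j).2).Nonempty →
      knownColoring A x i ≠ knownColoring A x j

namespace Adv

open scoped Classical

structure St where
  tau : ℝ
  pi : ℝ
  m : ℕ
  f : ℕ → ℝ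

variable (k : ℕ) (a : ℝ) (A : KnownRepAlg)

noncomputable def pd (s : St) : ℝ := (s.tau + s.pi) / 2
noncomputable def qd (s : St) : ℝ := s.tau + (s.pi - s.tau) / 4

/-- state after appending the probe interval -/
noncomputable def ap (s : St) : ℕ → ℝ := fun i => if i = s.m then a + 1 + pd s else s.f i

/-- color assigned by the algorithm to item `i`, when the lefts are `g` -/
noncomputable def colOf (g : ℕ → ℝ) (i : ℕ) : ℕ := A i (fun j => (g j.1, g j.1 + 1))

noncomputable def shareCond (s : St) : Prop :=
  colOf A (ap a s) s.m ∈ (Finset.range k).image (colOf A (ap a s))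

noncomputable def epochStep (s : St) : St :=
  if shareCond k a A s then
    ⟨s.tau, qd s, s.m + 2, fun i => if i = s.m + 1 then a + qd s else ap a s i⟩
  else
    ⟨pd s, s.pi, s.m + 1, ap a s⟩

noncomputable def F : ℕ → St
  | 0 => ⟨0, 1, k, fun _ => a⟩
  | e + 1 => epochStep k a A (F e)

end Adv

namespace Adv
variable (k : ℕ) (a : ℝ) (A : KnownRepAlg)

lemma step_m (s : St) :
    (epochStep k a A s).m = s.m + 1 ∨ (epochStep k a A s).m = s.m + 2 := by
  unfold epochStep; split <;> simp

lemma step_f (s : St) (i : ℕ) (hi : i ≤ s.m) :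
    (epochStep k a A s).f i = ap a s i := by
  unfold epochStep; split
  · simp only
    rw [if_neg (by omega)]
  · rfl

lemma step_f' (s : St) (i : ℕ) (hi : i < s.m) :
    (epochStep k a A s).f i = s.f i := by
  rw [step_f k a A s i hi.le]; unfold ap; rw [if_neg (by omega)]

lemma stab {e e' : ℕ} (h : e ≤ e') :
    (F k a A e).m ≤ (F k a A e').m ∧
      ∀ i, i < (F k a A e).m → (F k a A e').f i = (F k a A e).f i := by
  induction e' with
  | zero => simp_all
  | succ e' ih =>
    rcases Nat.lt_or_ge e (e'+1) with h' | h'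
    · obtain ⟨h1, h2⟩ := ih (by omega)
      have hm := step_m k a A (F k a A e')
      constructor
      · show (F k a A e).m ≤ (epochStep k a A (F k a A e')).m
        omega
      · intro i hi
        have : i < (F k a A e').m := lt_of_lt_of_le hi h1
        rw [show F k a A (e'+1) = epochStep k a A (F k a A e') from rfl,
          step_f' k a A _ i this, h2 i hi]
    · have : e = e' + 1 := by omega
      subst this; exact ⟨le_rfl, fun i _ => rfl⟩

lemma m_ge (e : ℕ) : k ≤ (F k a A e).m := by
  have := (stab k a A (Nat.zero_le e)).1
  exact this

end Adv

namespace Adv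
variable (k : ℕ) (a : ℝ) (A : KnownRepAlg) (E : ℕ)

noncomputable def XL : ℕ → ℝ := (F k a A E).f
noncomputable def nn : ℕ := (F k a A E).m
noncomputable def c : ℕ → ℕ := colOf A (XL k a A E)

lemma colOf_congr (g g' : ℕ → ℝ) (i : ℕ) (h : ∀ j ≤ i, g j = g' j) :
    colOf A g i = colOf A g' i := by
  unfold colOf
  congr 1
  funext j
  rw [h j.1 (by omega)]

lemma ap_eq {e : ℕ} (he : e < E) (j : ℕ) (hj : j ≤ (F k a A e).m) :
    ap a (F k a A e) j = XL k a A E j := by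
  have hstep : (F k a A (e+1)).f j = ap a (F k a A e) j :=
    step_f k a A (F k a A e) j hj
  have hm : j < (F k a A (e+1)).m := by
    have := step_m k a A (F k a A e)
    show j < (epochStep k a A (F k a A e)).m
    omega
  have := (stab k a A (show e + 1 ≤ E by omega)).2 j hm
  unfold XL
  rw [this, hstep]

lemma c_probe {e : ℕ} (he : e < E) (i : ℕ) (hi : i ≤ (F k a A e).m) :
    colOf A (ap a (F k a A e)) i = c k a A E i := by
  apply colOf_congr
  intro j hj
  exact ap_eq k a A E he j (le_trans hj hi)

lemma shareCond_iff {e : ℕ} (he : e < E) :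
    shareCond k a A (F k a A e) ↔
      c k a A E (F k a A e).m ∈ (Finset.range k).image (c k a A E) := by
  unfold shareCond
  rw [c_probe k a A E he _ le_rfl]
  constructor <;> intro h <;> obtain ⟨i, hik, hv⟩ := Finset.mem_image.1 h <;>
    refine Finset.mem_image.2 ⟨i, hik, ?_⟩
  · rw [← hv]
    exact (c_probe k a A E he i (le_trans (Finset.mem_range.1 hik).le (m_ge k a A e))).symm
  · rw [← hv]
    exact c_probe k a A E he i (le_trans (Finset.mem_range.1 hik).le (m_ge k a A e))

end Adv

namespace Adv
variable (k : ℕ) (a : ℝ) (A : KnownRepAlg) (E : ℕ)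

noncomputable def xx : Fin (nn k a A E) → ℝ × ℝ :=
  fun i => (XL k a A E i.1, XL k a A E i.1 + 1)

lemma kc (i : Fin (nn k a A E)) :
    knownColoring A (xx k a A E) i = c k a A E i.1 := rfl

lemma dist (hA : IsProperKnown A) {i j : ℕ}
    (hi : i < nn k a A E) (hj : j < nn k a A E) (hij : i ≠ j)
    (hd : |XL k a A E i - XL k a A E j| ≤ 1) :
    c k a A E i ≠ c k a A E j := by
  obtain ⟨h1, h2⟩ := abs_le.1 hd
  have := hA (nn k a A E) (xx k a A E)
    (fun i => by simp [xx])
    ⟨i, hi⟩ ⟨j, hj⟩ (by simp [Fin.ext_iff, hij])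
    (by
      refine ⟨max (XL k a A E i) (XL k a A E j), ⟨?_, ?_⟩, ⟨?_, ?_⟩⟩ <;>
        simp only [xx] <;>
        [exact le_max_left _ _; exact max_le (by linarith) (by linarith);
         exact le_max_right _ _; exact max_le (by linarith) (by linarith)])
  rwa [kc, kc] at this

noncomputable def baseCols : Finset ℕ := (Finset.range k).image (c k a A E)

structure Inv (e : ℕ) : Prop where
  ht0 : 0 ≤ (F k a A e).tau
  htp : (F k a A e).tau < (F k a A e).pi
  hp1 : (F k a A e).pi ≤ 1
  hbase : ∀ i < (F k a A e).m, (i < k ↔ (F k a A e).f i = a)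
  hshape : ∀ i < (F k a A e).m, k ≤ i →
    (a < (F k a A e).f i ∧ (F k a A e).f i < a + 1 ∧ a + (F k a A e).pi ≤ (F k a A e).f i) ∨
    (a + 1 < (F k a A e).f i ∧ (F k a A e).f i < a + 2)
  hprobes : ((Finset.range (F k a A e).m).filter
      (fun i => a + 1 < (F k a A e).f i)).card = e
  hstair : ∀ x : ℝ, 0 < x →
    ((Finset.range (F k a A e).m).filter
      (fun i => a + x ≤ (F k a A e).f i ∧ (F k a A e).f i < a + 1)).card ≤
    ((Finset.range (F k a A e).m).filter
      (fun i => a + 1 + x < (F k a A e).f i)).card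
  hpun : ∃ S : Finset ℕ,
    S.card = ((Finset.range (F k a A e).m).filter
      (fun i => a < (F k a A e).f i ∧ (F k a A e).f i < a + 1)).card ∧
    ∀ cs ∈ S, cs ∈ baseCols k a A E ∧
      ∃ i < (F k a A e).m, a + 1 < (F k a A e).f i ∧ c k a A E i = cs
  hW : ∃ W : Finset ℕ, W.card = k + e ∧ ∀ w ∈ W, ∃ i < (F k a A e).m,
    c k a A E i = w ∧ a ≤ (F k a A e).f i ∧ (F k a A e).f i ≤ a + 1 + (F k a A e).tau

end Adv

namespace Adv
variable (k : ℕ) (a : ℝ) (A : KnownRepAlg) (E : ℕ)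

lemma F_zero : F k a A 0 = ⟨0, 1, k, fun _ => a⟩ := rfl

lemma XL_zero (i : ℕ) (hi : i < k) : XL k a A E i = a := by
  have := (stab k a A (Nat.zero_le E)).2 i (by simpa [F_zero] using hi)
  unfold XL
  rw [this, F_zero]

lemma nn_ge (e : ℕ) (he : e ≤ E) : (F k a A e).m ≤ nn k a A E :=
  (stab k a A he).1

lemma inv0 (hA : IsProperKnown A) : Inv k a A E 0 := by
  have hm0 : (F k a A 0).m = k := rfl
  have hf0 : ∀ i, (F k a A 0).f i = a := fun i => rfl
  have ht : (F k a A 0).tau = 0 := rfl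
  have hp : (F k a A 0).pi = 1 := rfl
  refine ⟨by rw [ht], by rw [ht, hp]; norm_num, by rw [hp], ?_, ?_, ?_, ?_, ?_, ?_⟩
  · intro i hi
    rw [hm0] at hi
    simp [hf0, hi]
  · intro i hi hki
    rw [hm0] at hi
    omega
  · rw [hm0]
    rw [Finset.filter_false_of_mem (fun i _ => by rw [hf0]; intro h; linarith)]
    simp
  · intro x hx
    rw [hm0]
    rw [Finset.filter_false_of_mem (fun i _ => by rw [hf0]; intro ⟨h1, _⟩; linarith)]
    simp
  · refine ⟨∅, ?_, by simp⟩
    rw [hm0, Finset.filter_false_of_mem (fun i _ => by rw [hf0]; intro ⟨h1, _⟩; linarith)]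
  · refine ⟨baseCols k a A E, ?_, ?_⟩
    · unfold baseCols
      rw [Finset.card_image_of_injOn, Finset.card_range]
      · omega
      · intro i hi j hj hij
        by_contra hne
        have hkn : k ≤ nn k a A E := le_trans (le_of_eq hm0.symm) (nn_ge k a A E 0 (Nat.zero_le E))
        exact dist k a A E hA
          (lt_of_lt_of_le (Finset.mem_range.1 hi) hkn)
          (lt_of_lt_of_le (Finset.mem_range.1 hj) hkn)
          hne
          (by rw [XL_zero k a A E i (Finset.mem_range.1 hi),
                XL_zero k a A E j (Finset.mem_range.1 hj)]; simp)
          hij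
    · intro w hw
      obtain ⟨i, hik, hv⟩ := Finset.mem_image.1 hw
      have hik := Finset.mem_range.1 hik
      refine ⟨i, by rw [hm0]; exact hik, hv, ?_, ?_⟩
      · rw [hf0]
      · rw [hf0, ht]; linarith

end Adv

namespace Adv
variable (k : ℕ) (a : ℝ) (A : KnownRepAlg) (E : ℕ)

lemma XL_lt {e : ℕ} (he : e ≤ E) {j : ℕ} (hj : j < (F k a A e).m) :
    XL k a A E j = (F k a A e).f j := (stab k a A he).2 j hj

lemma F_succ_share {e : ℕ} (hsh : shareCond k a A (F k a A e)) :
    F k a A (e+1) = ⟨(F k a A e).tau, qd (F k a A e), (F k a A e).m + 2,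
      fun i => if i = (F k a A e).m + 1 then a + qd (F k a A e) else ap a (F k a A e) i⟩ := by
  show epochStep k a A (F k a A e) = _
  unfold epochStep
  rw [if_pos hsh]

lemma F_succ_fresh {e : ℕ} (hsh : ¬ shareCond k a A (F k a A e)) :
    F k a A (e+1) = ⟨pd (F k a A e), (F k a A e).pi, (F k a A e).m + 1, ap a (F k a A e)⟩ := by
  show epochStep k a A (F k a A e) = _
  unfold epochStep
  rw [if_neg hsh]

lemma XL_probe {e : ℕ} (he : e < E) :
    XL k a A E (F k a A e).m = a + 1 + pd (F k a A e) := by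
  rw [← ap_eq k a A E he _ le_rfl]
  unfold ap
  rw [if_pos rfl]

lemma m_lt_nn {e : ℕ} (he : e < E) : (F k a A e).m < nn k a A E := by
  have h1 : (F k a A (e+1)).m ≤ nn k a A E := nn_ge k a A E (e+1) he
  have := step_m k a A (F k a A e)
  show (F k a A e).m < nn k a A E
  have h2 : (F k a A (e+1)).m = (epochStep k a A (F k a A e)).m := rfl
  omega

/-- the new probe gets a color different from every earlier non-base item -/
lemma probe_conf (hA : IsProperKnown A) {e : ℕ} (he : e < E) (hinv : Inv k a A E e)
    {i : ℕ} (hi : i < (F k a A e).m) (hki : k ≤ i) :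
    c k a A E (F k a A e).m ≠ c k a A E i := by
  have h1 := hinv.htp
  have h2 := hinv.hp1
  have h3 := hinv.ht0
  have hpd1 : pd (F k a A e) < (F k a A e).pi := by unfold pd; linarith
  have hpd0 : (F k a A e).tau < pd (F k a A e) := by unfold pd; linarith
  apply dist k a A E hA (m_lt_nn k a A E he) (lt_trans hi (m_lt_nn k a A E he)) (by omega)
  rw [XL_probe k a A E he, XL_lt k a A E he.le hi]
  rcases hinv.hshape i hi hki with ⟨hb1, hb2, hb3⟩ | ⟨hb1, hb2⟩ <;>
    rw [abs_le] <;> constructor <;> linarith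

/-- the punisher gets a color different from every earlier "low" item -/
lemma pun_conf (hA : IsProperKnown A) {e : ℕ} (he : e < E)
    (hinv : Inv k a A E e) (hsh : shareCond k a A (F k a A e))
    {i : ℕ} (hi : i < (F k a A e).m)
    (hlow1 : a ≤ (F k a A e).f i) (hlow2 : (F k a A e).f i ≤ a + 1 + (F k a A e).tau) :
    c k a A E ((F k a A e).m + 1) ≠ c k a A E i := by
  have h1 := hinv.htp
  have h2 := hinv.hp1
  have h3 := hinv.ht0
  have hq0 : (F k a A e).tau < qd (F k a A e) := by unfold qd; linarith
  have hq1 : qd (F k a A e) < (F k a A e).pi := by unfold qd; linarith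
  have hmn : (F k a A e).m + 1 < nn k a A E := by
    have h1 : (F k a A (e+1)).m ≤ nn k a A E := nn_ge k a A E (e+1) he
    have h2 : (F k a A (e+1)).m = (F k a A e).m + 2 := by
      rw [F_succ_share k a A hsh]
    omega
  have hXL : XL k a A E ((F k a A e).m + 1) = a + qd (F k a A e) := by
    have hlt : (F k a A e).m + 1 < (F k a A (e+1)).m := by
      have : (F k a A (e+1)).m = (F k a A e).m + 2 := by
        rw [F_succ_share k a A hsh]
      omega
    rw [XL_lt k a A E (show e + 1 ≤ E by omega) hlt, F_succ_share k a A hsh]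
    simp
  apply dist k a A E hA hmn (by omega) (by omega)
  rw [hXL, XL_lt k a A E he.le hi, abs_le]
  constructor <;> linarith

end Adv

namespace Adv

open scoped Classical

lemma card_filter_succ (m : ℕ) (Q : ℕ → Prop) [DecidablePred Q] :
    ((Finset.range (m+1)).filter Q).card
      = ((Finset.range m).filter Q).card + (if Q m then 1 else 0) := by
  rw [Finset.range_add_one, Finset.filter_insert]
  split
  · rw [Finset.card_insert_of_notMem (by simp)]
  · simp

lemma card_filter_congr {m : ℕ} {Q Q' : ℕ → Prop}
    [DecidablePred Q] [DecidablePred Q']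
    (h : ∀ i < m, (Q i ↔ Q' i)) :
    ((Finset.range m).filter Q).card = ((Finset.range m).filter Q').card := by
  rw [Finset.filter_congr (fun x hx => by
    simp only [Finset.mem_range] at hx
    exact h x hx)]

variable (k : ℕ) (a : ℝ) (A : KnownRepAlg) (E : ℕ)

lemma inv_step_fresh (hA : IsProperKnown A) {e : ℕ} (he : e < E)
    (hinv : Inv k a A E e) (hsh : ¬ shareCond k a A (F k a A e)) :
    Inv k a A E (e+1) := by
  have hT0 := hinv.ht0
  have hTP := hinv.htp
  have hP1 := hinv.hp1
  have hkM : k ≤ (F k a A e).m := m_ge k a A e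
  have hpdT : (F k a A e).tau < pd (F k a A e) := by unfold pd; linarith
  have hpdP : pd (F k a A e) < (F k a A e).pi := by unfold pd; linarith
  have hFs := F_succ_fresh k a A hsh
  have hm' : (F k a A (e+1)).m = (F k a A e).m + 1 := by rw [hFs]
  have hf'M : (F k a A (e+1)).f (F k a A e).m = a + 1 + pd (F k a A e) := by
    rw [hFs]; show ap a (F k a A e) (F k a A e).m = _; unfold ap; rw [if_pos rfl]
  have hf'lt : ∀ i < (F k a A e).m, (F k a A (e+1)).f i = (F k a A e).f i := by
    intro i hi
    rw [hFs]; show ap a (F k a A e) i = _; unfold ap; rw [if_neg (by omega)]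
  have htau' : (F k a A (e+1)).tau = pd (F k a A e) := by rw [hFs]
  have hpi' : (F k a A (e+1)).pi = (F k a A e).pi := by rw [hFs]
  -- the probe's color is not a base color
  have hcM : c k a A E (F k a A e).m ∉ baseCols k a A E := by
    rw [shareCond_iff k a A E he] at hsh
    exact hsh
  refine ⟨?_, ?_, ?_, ?_, ?_, ?_, ?_, ?_, ?_⟩
  · rw [htau']; linarith
  · rw [htau', hpi']; linarith
  · rw [hpi']; linarith
  · intro i hi
    rw [hm'] at hi
    rcases Nat.lt_or_ge i (F k a A e).m with h | h
    · rw [hf'lt i h]; exact hinv.hbase i h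
    · have : i = (F k a A e).m := by omega
      subst this
      rw [hf'M]
      constructor
      · intro h'; omega
      · intro h'; exfalso; linarith
  · intro i hi hki
    rw [hm'] at hi
    rcases Nat.lt_or_ge i (F k a A e).m with h | h
    · rw [hf'lt i h, hpi']
      exact hinv.hshape i h hki
    · have : i = (F k a A e).m := by omega
      subst this
      rw [hf'M]
      right
      constructor <;> linarith
  · rw [hm', card_filter_succ, if_pos (by rw [hf'M]; linarith),
      card_filter_congr (fun i hi => by rw [hf'lt i hi]), hinv.hprobes]
  · intro x hx
    rw [hm', card_filter_succ, card_filter_succ,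
      if_neg (by rw [hf'M]; intro ⟨_, h2⟩; linarith),
      card_filter_congr (fun i hi => by rw [hf'lt i hi]),
      card_filter_congr (fun i hi => (by rw [hf'lt i hi] :
        (a + 1 + x < (F k a A (e+1)).f i) ↔ (a + 1 + x < (F k a A e).f i)))]
    have := hinv.hstair x hx
    omega
  · obtain ⟨S, hS1, hS2⟩ := hinv.hpun
    refine ⟨S, ?_, ?_⟩
    · rw [hm', card_filter_succ, if_neg (by rw [hf'M]; intro ⟨_, h2⟩; linarith),
        card_filter_congr (fun i hi => by rw [hf'lt i hi]), hS1]
      omega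
    · intro cs hcs
      obtain ⟨hb, i, hi, hp, hc⟩ := hS2 cs hcs
      exact ⟨hb, i, by omega, by rw [hf'lt i hi]; exact hp, hc⟩
  · obtain ⟨W, hW1, hW2⟩ := hinv.hW
    refine ⟨insert (c k a A E (F k a A e).m) W, ?_, ?_⟩
    · have hnm : c k a A E (F k a A e).m ∉ W := by
        intro hmem
        obtain ⟨i, hi, hci, hlow1, hlow2⟩ := hW2 _ hmem
        rcases Nat.lt_or_ge i k with hik | hik
        · exact hcM (by rw [← hci]; exact Finset.mem_image.2 ⟨i, Finset.mem_range.2 hik, rfl⟩)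
        · exact probe_conf k a A E hA he hinv hi hik hci.symm
      rw [Finset.card_insert_of_notMem hnm, hW1]
      omega
    · intro w hw
      rcases Finset.mem_insert.1 hw with h | h
      · refine ⟨(F k a A e).m, by omega, h.symm, ?_, ?_⟩
        · rw [hf'M]; linarith
        · rw [hf'M, htau']
      · obtain ⟨i, hi, hci, hlow1, hlow2⟩ := hW2 w h
        refine ⟨i, by omega, hci, ?_, ?_⟩
        · rw [hf'lt i hi]; exact hlow1
        · rw [hf'lt i hi, htau']; linarith

end Adv

namespace Adv
variable (k : ℕ) (a : ℝ) (A : KnownRepAlg) (E : ℕ)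

lemma inv_step_share (hA : IsProperKnown A) {e : ℕ} (he : e < E)
    (hinv : Inv k a A E e) (hsh : shareCond k a A (F k a A e)) :
    Inv k a A E (e+1) := by
  have hT0 := hinv.ht0
  have hTP := hinv.htp
  have hP1 := hinv.hp1
  have hkM : k ≤ (F k a A e).m := m_ge k a A e
  have hpdT : (F k a A e).tau < pd (F k a A e) := by unfold pd; linarith
  have hpdP : pd (F k a A e) < (F k a A e).pi := by unfold pd; linarith
  have hqT : (F k a A e).tau < qd (F k a A e) := by unfold qd; linarith
  have hqpd : qd (F k a A e) < pd (F k a A e) := by unfold qd pd; linarith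
  have hqP : qd (F k a A e) < (F k a A e).pi := by unfold qd; linarith
  have hFs := F_succ_share k a A hsh
  have hm' : (F k a A (e+1)).m = (F k a A e).m + 2 := by rw [hFs]
  have hf'M : (F k a A (e+1)).f (F k a A e).m = a + 1 + pd (F k a A e) := by
    rw [hFs]
    show (if (F k a A e).m = (F k a A e).m + 1 then _ else ap a (F k a A e) (F k a A e).m) = _
    rw [if_neg (by omega)]
    unfold ap
    rw [if_pos rfl]
  have hf'M1 : (F k a A (e+1)).f ((F k a A e).m + 1) = a + qd (F k a A e) := by
    rw [hFs]
    show (if (F k a A e).m + 1 = (F k a A e).m + 1 then _ else ap a (F k a A e) _) = _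
    rw [if_pos rfl]
  have hf'lt : ∀ i < (F k a A e).m, (F k a A (e+1)).f i = (F k a A e).f i := by
    intro i hi
    rw [hFs]
    show (if i = (F k a A e).m + 1 then _ else ap a (F k a A e) i) = _
    rw [if_neg (by omega)]
    unfold ap
    rw [if_neg (by omega)]
  have htau' : (F k a A (e+1)).tau = (F k a A e).tau := by rw [hFs]
  have hpi' : (F k a A (e+1)).pi = qd (F k a A e) := by rw [hFs]
  have hcM : c k a A E (F k a A e).m ∈ baseCols k a A E := by
    rw [shareCond_iff k a A E he] at hsh
    exact hsh
  refine ⟨?_, ?_, ?_, ?_, ?_, ?_, ?_, ?_, ?_⟩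
  · rw [htau']; linarith
  · rw [htau', hpi']; linarith
  · rw [hpi']; linarith
  · intro i hi
    rw [hm'] at hi
    rcases Nat.lt_or_ge i (F k a A e).m with h | h
    · rw [hf'lt i h]; exact hinv.hbase i h
    · rcases Nat.lt_or_ge i ((F k a A e).m + 1) with h2 | h2
      · have : i = (F k a A e).m := by omega
        subst this
        rw [hf'M]
        exact ⟨fun h' => by omega, fun h' => by exfalso; linarith⟩
      · have : i = (F k a A e).m + 1 := by omega
        subst this
        rw [hf'M1]
        exact ⟨fun h' => by omega, fun h' => by exfalso; linarith⟩
  · intro i hi hki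
    rw [hm'] at hi
    rcases Nat.lt_or_ge i (F k a A e).m with h | h
    · rw [hf'lt i h, hpi']
      rcases hinv.hshape i h hki with ⟨h1, h2, h3⟩ | h'
      · left; refine ⟨h1, h2, ?_⟩; linarith
      · right; exact h'
    · rcases Nat.lt_or_ge i ((F k a A e).m + 1) with h2 | h2
      · have : i = (F k a A e).m := by omega
        subst this
        rw [hf'M]
        right; constructor <;> linarith
      · have : i = (F k a A e).m + 1 := by omega
        subst this
        rw [hf'M1, hpi']
        left; refine ⟨by linarith, by linarith, le_rfl⟩
  · rw [hm', show (F k a A e).m + 2 = ((F k a A e).m + 1) + 1 from rfl,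
      card_filter_succ, if_neg (by rw [hf'M1]; intro h; linarith),
      card_filter_succ, if_pos (by rw [hf'M]; linarith),
      card_filter_congr (fun i hi => by rw [hf'lt i hi]), hinv.hprobes]
  · intro x hx
    rw [hm', show (F k a A e).m + 2 = ((F k a A e).m + 1) + 1 from rfl,
      card_filter_succ, card_filter_succ,
      card_filter_congr (fun i hi => (by rw [hf'lt i hi] :
        (a + x ≤ (F k a A (e+1)).f i ∧ (F k a A (e+1)).f i < a + 1) ↔
        (a + x ≤ (F k a A e).f i ∧ (F k a A e).f i < a + 1))),
      if_neg (by rw [hf'M]; intro ⟨_, h2⟩; linarith)]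
    conv_rhs => rw [card_filter_succ, card_filter_succ,
      card_filter_congr (fun i hi => (by rw [hf'lt i hi] :
        (a + 1 + x < (F k a A (e+1)).f i) ↔ (a + 1 + x < (F k a A e).f i)))]
    rw [if_neg (show ¬(a + 1 + x < (F k a A (e+1)).f ((F k a A e).m + 1)) by
        rw [hf'M1]; intro h; linarith)]
    have hst := hinv.hstair x hx
    by_cases hxq : x ≤ qd (F k a A e)
    · rw [if_pos (show a + x ≤ (F k a A (e+1)).f ((F k a A e).m + 1) ∧
          (F k a A (e+1)).f ((F k a A e).m + 1) < a + 1 by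
          rw [hf'M1]; exact ⟨by linarith, by linarith⟩),
        if_pos (show a + 1 + x < (F k a A (e+1)).f (F k a A e).m by
          rw [hf'M]; linarith)]
      omega
    · rw [if_neg (show ¬(a + x ≤ (F k a A (e+1)).f ((F k a A e).m + 1) ∧
          (F k a A (e+1)).f ((F k a A e).m + 1) < a + 1) by
          rw [hf'M1]; intro ⟨h1, _⟩; exact hxq (by linarith))]
      omega
  · obtain ⟨S, hS1, hS2⟩ := hinv.hpun
    have hnm : c k a A E (F k a A e).m ∉ S := by
      intro hmem
      obtain ⟨_, i, hi, hp, hc⟩ := hS2 _ hmem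
      have hik : k ≤ i := by
        by_contra hik
        have := (hinv.hbase i hi).1 (by omega)
        linarith
      exact probe_conf k a A E hA he hinv hi hik hc.symm
    refine ⟨insert (c k a A E (F k a A e).m) S, ?_, ?_⟩
    · rw [Finset.card_insert_of_notMem hnm, hS1, hm',
        show (F k a A e).m + 2 = ((F k a A e).m + 1) + 1 from rfl,
        card_filter_succ, if_pos (by rw [hf'M1]; exact ⟨by linarith, by linarith⟩),
        card_filter_succ, if_neg (by rw [hf'M]; intro ⟨_, h2⟩; linarith),
        card_filter_congr (fun i hi => (by rw [hf'lt i hi] :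
          (a < (F k a A (e+1)).f i ∧ (F k a A (e+1)).f i < a + 1) ↔
          (a < (F k a A e).f i ∧ (F k a A e).f i < a + 1)))]
    · intro cs hcs
      rcases Finset.mem_insert.1 hcs with h | h
      · subst h
        exact ⟨hcM, (F k a A e).m, by omega, by rw [hf'M]; linarith, rfl⟩
      · obtain ⟨hb, i, hi, hp, hc⟩ := hS2 cs h
        exact ⟨hb, i, by omega, by rw [hf'lt i hi]; exact hp, hc⟩
  · obtain ⟨W, hW1, hW2⟩ := hinv.hW
    have hnm : c k a A E ((F k a A e).m + 1) ∉ W := by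
      intro hmem
      obtain ⟨i, hi, hci, hlow1, hlow2⟩ := hW2 _ hmem
      exact pun_conf k a A E hA he hinv hsh hi hlow1 hlow2 hci.symm
    refine ⟨insert (c k a A E ((F k a A e).m + 1)) W, ?_, ?_⟩
    · rw [Finset.card_insert_of_notMem hnm, hW1]
      omega
    · intro w hw
      rcases Finset.mem_insert.1 hw with h | h
      · refine ⟨(F k a A e).m + 1, by omega, h.symm, ?_, ?_⟩
        · rw [hf'M1]; linarith
        · rw [hf'M1, htau']; linarith
      · obtain ⟨i, hi, hci, hlow1, hlow2⟩ := hW2 w h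
        refine ⟨i, by omega, hci, ?_, ?_⟩
        · rw [hf'lt i hi]; exact hlow1
        · rw [hf'lt i hi, htau']; linarith

lemma inv_all (hA : IsProperKnown A) {e : ℕ} (he : e ≤ E) : Inv k a A E e := by
  induction e with
  | zero => exact inv0 k a A E hA
  | succ e ih =>
    by_cases hsh : shareCond k a A (F k a A e)
    · exact inv_step_share k a A E hA (by omega) (ih (by omega)) hsh
    · exact inv_step_fresh k a A E hA (by omega) (ih (by omega)) hsh

end Adv

namespace Adv

open scoped Classical

lemma card_fin_filter (n : ℕ) (Q : ℕ → Prop) [DecidablePred Q] :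
    (Finset.univ.filter (fun i : Fin n => Q i.1)).card
      = ((Finset.range n).filter Q).card := by
  apply Finset.card_bij (fun i _ => i.1)
  · intro i hi
    simp only [Finset.mem_filter, Finset.mem_univ, true_and] at hi
    simp only [Finset.mem_filter, Finset.mem_range]
    exact ⟨i.2, hi⟩
  · intro i _ j _ h
    exact Fin.ext h
  · intro b hb
    simp only [Finset.mem_filter, Finset.mem_range] at hb
    exact ⟨⟨b, hb.1⟩, by simp [hb.2], rfl⟩

variable (k : ℕ) (a : ℝ) (A : KnownRepAlg)

theorem main (hk : 1 ≤ k) (hA : IsProperKnown A) :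
    ∃ (n : ℕ) (x : Fin n → ℝ × ℝ),
      (∀ i, (x i).2 - (x i).1 = 1) ∧
      (∀ i, Set.Icc (x i).1 (x i).2 ⊆ Set.Icc a (a + 3)) ∧
      (∀ t : ℝ, {i : Fin n | t ∈ Set.Icc (x i).1 (x i).2}.ncard ≤ 2 * k) ∧
      3 * k ≤ (Set.range (knownColoring A x)).ncard := by
  set E := 2 * k with hE
  have hinv : Inv k a A E E := inv_all k a A E hA le_rfl
  have hXLf : ∀ i, XL k a A E i = (F k a A E).f i := fun i => rfl
  have hnm : nn k a A E = (F k a A E).m := rfl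
  -- trichotomy of items
  have htri : ∀ i < nn k a A E,
      (F k a A E).f i = a ∨
      (a < (F k a A E).f i ∧ (F k a A E).f i < a + 1) ∨
      (a + 1 < (F k a A E).f i ∧ (F k a A E).f i < a + 2) := by
    intro i hi
    rw [hnm] at hi
    rcases Nat.lt_or_ge i k with h | h
    · exact Or.inl ((hinv.hbase i hi).1 h)
    · rcases hinv.hshape i hi h with ⟨h1, h2, _⟩ | h'
      · exact Or.inr (Or.inl ⟨h1, h2⟩)
      · exact Or.inr (Or.inr h')
  have hbnd : ∀ i < nn k a A E, a ≤ (F k a A E).f i ∧ (F k a A E).f i ≤ a + 2 := by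
    intro i hi
    rcases htri i hi with h | ⟨h1, h2⟩ | ⟨h1, h2⟩
    · rw [h]; constructor <;> linarith
    · constructor <;> linarith
    · constructor <;> linarith
  -- number of punishers is at most k
  have hpunk : ((Finset.range (nn k a A E)).filter
      (fun i => a < (F k a A E).f i ∧ (F k a A E).f i < a + 1)).card ≤ k := by
    obtain ⟨S, hS1, hS2⟩ := hinv.hpun
    rw [hnm, ← hS1]
    calc S.card ≤ (baseCols k a A E).card :=
          Finset.card_le_card (fun cs hcs => (hS2 cs hcs).1)
      _ ≤ (Finset.range k).card := Finset.card_image_le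
      _ = k := Finset.card_range k
  have hbasek : ((Finset.range (nn k a A E)).filter
      (fun i => (F k a A E).f i = a)).card = k := by
    rw [hnm, card_filter_congr (fun i hi => ((hinv.hbase i hi).symm :
      ((F k a A E).f i = a) ↔ (i < k)))]
    have : (Finset.range (F k a A E).m).filter (fun i => i < k) = Finset.range k := by
      ext j
      simp only [Finset.mem_filter, Finset.mem_range]
      have := m_ge k a A E
      omega
    rw [this, Finset.card_range]
  refine ⟨nn k a A E, xx k a A E, fun i => by simp [xx], ?_, ?_, ?_⟩
  · intro i t ht
    simp only [xx, Set.mem_Icc] at ht ⊢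
    rw [hXLf i.1] at ht
    obtain ⟨h1, h2⟩ := hbnd i.1 i.2
    constructor <;> linarith
  · intro t
    have hset : {i : Fin (nn k a A E) | t ∈ Set.Icc (xx k a A E i).1 (xx k a A E i).2}
        = ↑(Finset.univ.filter (fun i : Fin (nn k a A E) =>
            (F k a A E).f i.1 ≤ t ∧ t ≤ (F k a A E).f i.1 + 1)) := by
      ext i
      simp [xx, Set.mem_Icc, XL]
    rw [hset, Set.ncard_coe_finset,
      card_fin_filter (nn k a A E)
        (fun j => (F k a A E).f j ≤ t ∧ t ≤ (F k a A E).f j + 1)]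
    set Q : ℕ → Prop := fun j => (F k a A E).f j ≤ t ∧ t ≤ (F k a A E).f j + 1 with hQ
    rcases le_or_gt t (a+1) with hc | hc
    · -- only base and punisher intervals contain t
      have hsub : (Finset.range (nn k a A E)).filter Q ⊆
          ((Finset.range (nn k a A E)).filter (fun i => (F k a A E).f i = a)) ∪
          ((Finset.range (nn k a A E)).filter
            (fun i => a < (F k a A E).f i ∧ (F k a A E).f i < a + 1)) := by
        intro j hj
        simp only [Finset.mem_filter, Finset.mem_range, Finset.mem_union] at hj ⊢
        obtain ⟨hjn, hq1, hq2⟩ := hj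
        rcases htri j hjn with h | h | ⟨h1, h2⟩
        · exact Or.inl ⟨hjn, h⟩
        · exact Or.inr ⟨hjn, h⟩
        · exfalso; linarith
      calc ((Finset.range (nn k a A E)).filter Q).card
          ≤ _ := Finset.card_le_card hsub
        _ ≤ _ := Finset.card_union_le _ _
        _ ≤ 2 * k := by rw [hbasek]; omega
    · rcases le_or_gt t (a+2) with hc2 | hc2
      · -- punishers above t-1-a and probes below t
        set y := t - (a + 1) with hy
        have hy0 : 0 < y := by rw [hy]; linarith
        have hsub : (Finset.range (nn k a A E)).filter Q ⊆
            ((Finset.range (nn k a A E)).filter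
              (fun i => a + y ≤ (F k a A E).f i ∧ (F k a A E).f i < a + 1)) ∪
            ((Finset.range (nn k a A E)).filter
              (fun i => a + 1 < (F k a A E).f i ∧ ¬(a + 1 + y < (F k a A E).f i))) := by
          intro j hj
          simp only [Finset.mem_filter, Finset.mem_range, Finset.mem_union] at hj ⊢
          obtain ⟨hjn, hq1, hq2⟩ := hj
          rcases htri j hjn with h | ⟨h1, h2⟩ | ⟨h1, h2⟩
          · exfalso; rw [h] at hq2; rw [hy] at *; linarith
          · exact Or.inl ⟨hjn, by rw [hy]; linarith, h2⟩
          · exact Or.inr ⟨hjn, h1, by rw [hy]; intro hh; linarith⟩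
        have hstair := hinv.hstair y hy0
        rw [← hnm] at hstair
        have hdisj : Disjoint
            ((Finset.range (nn k a A E)).filter
              (fun i => a + 1 + y < (F k a A E).f i))
            ((Finset.range (nn k a A E)).filter
              (fun i => a + 1 < (F k a A E).f i ∧ ¬(a + 1 + y < (F k a A E).f i))) := by
          rw [Finset.disjoint_left]
          intro j hj1 hj2
          simp only [Finset.mem_filter] at hj1 hj2
          exact absurd hj1.2 hj2.2.2
        have hcup : ((Finset.range (nn k a A E)).filter
              (fun i => a + 1 + y < (F k a A E).f i)).card +
            ((Finset.range (nn k a A E)).filter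
              (fun i => a + 1 < (F k a A E).f i ∧ ¬(a + 1 + y < (F k a A E).f i))).card
            ≤ E := by
          rw [← Finset.card_union_of_disjoint hdisj]
          have hsub2 : ((Finset.range (nn k a A E)).filter
              (fun i => a + 1 + y < (F k a A E).f i)) ∪
              ((Finset.range (nn k a A E)).filter
              (fun i => a + 1 < (F k a A E).f i ∧ ¬(a + 1 + y < (F k a A E).f i))) ⊆
              ((Finset.range (nn k a A E)).filter (fun i => a + 1 < (F k a A E).f i)) := by
            intro j hj
            simp only [Finset.mem_union, Finset.mem_filter, Finset.mem_range] at hj ⊢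
            rcases hj with ⟨hjn, hh⟩ | ⟨hjn, hh, _⟩
            · exact ⟨hjn, by linarith⟩
            · exact ⟨hjn, hh⟩
          calc _ ≤ _ := Finset.card_le_card hsub2
            _ = E := by rw [hnm]; exact hinv.hprobes
        calc ((Finset.range (nn k a A E)).filter Q).card
            ≤ _ := Finset.card_le_card hsub
          _ ≤ _ := Finset.card_union_le _ _
          _ ≤ 2 * k := by omega
      · -- only probes contain t
        have hsub : (Finset.range (nn k a A E)).filter Q ⊆
            ((Finset.range (nn k a A E)).filter
              (fun i => a + 1 < (F k a A E).f i)) := by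
          intro j hj
          simp only [Finset.mem_filter, Finset.mem_range] at hj ⊢
          obtain ⟨hjn, hq1, hq2⟩ := hj
          rcases htri j hjn with h | ⟨h1, h2⟩ | ⟨h1, h2⟩
          · exfalso; rw [h] at hq2; linarith
          · exfalso; linarith
          · exact ⟨hjn, h1⟩
        calc ((Finset.range (nn k a A E)).filter Q).card
            ≤ _ := Finset.card_le_card hsub
          _ = E := by rw [hnm]; exact hinv.hprobes
          _ ≤ 2 * k := le_rfl
  · obtain ⟨W, hW1, hW2⟩ := hinv.hW
    have hsub : (↑W : Set ℕ) ⊆ Set.range (knownColoring A (xx k a A E)) := by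
      intro w hw
      obtain ⟨i, hi, hci, _, _⟩ := hW2 w (by exact hw)
      rw [← hnm] at hi
      exact ⟨⟨i, hi⟩, by rw [kc]; exact hci⟩
    calc 3 * k = W.card := by rw [hW1]; omega
      _ = (↑W : Set ℕ).ncard := (Set.ncard_coe_finset W).symm
      _ ≤ _ := Set.ncard_le_ncard hsub (Set.finite_range _)

end Adv


theorem stmt4 (k : ℕ) (hk : 1 ≤ k) (a : ℝ) (A : KnownRepAlg) (hA : IsProperKnown A) :
    ∃ (n : ℕ) (x : Fin n → ℝ × ℝ),
      (∀ i, (x i).2 - (x i).1 = 1) ∧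
      (∀ i, Set.Icc (x i).1 (x i).2 ⊆ Set.Icc a (a + 3)) ∧
      (∀ t : ℝ, {i : Fin n | t ∈ Set.Icc (x i).1 (x i).2}.ncard ≤ 2 * k) ∧
      3 * k ≤ (Set.range (knownColoring A x)).ncard := by
  exact Adv.main k a A hk hA
end

section
/- For every positive integer k and every real number a, there exists a finite sequence of closed intervals in ℝ, each of length exactly 1 and each contained in [a, a+4], whose clique number is at most k, on which the First-Fit coloring uses at least 2k − 1 colors. -/
namespace Stmt5Aux

/-- slot (position index) of the `p`-th presented interval. -/
def slotF (g p : ℕ) : ℕ :=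
  if p ≤ g then p
  else if (p - g - 1) % 2 = 0 then 2*g + 1 + (p - g - 1)/2
  else g + (p - g)/2

/-- intended first-fit color of the `p`-th presented interval. -/
def colF (g p : ℕ) : ℕ :=
  if p ≤ g then p + 1
  else if (p - g - 1) % 2 = 0 then (p - g - 1)/2 + 1
  else g + 1 + (p - g)/2

/-- witness: an earlier interval adjacent to `p` with color `c`. -/
def witF (g p c : ℕ) : ℕ :=
  if p ≤ g then c - 1
  else if (p - g - 1) % 2 = 0 then g + 2*c - 1
  else if c ≤ (p - g)/2 then g + 2*c - 1
  else if c ≤ g + 1 then c - 1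
  else g + 2*(c - g - 1)

lemma slotF_le {g p : ℕ} (h : p ≤ 3*g) : slotF g p ≤ 3*g := by
  unfold slotF; split_ifs <;> omega

lemma slotF_inj {g p q : ℕ} (hp : p ≤ 3*g) (hq : q ≤ 3*g)
    (h : slotF g p = slotF g q) : p = q := by
  unfold slotF at h; split_ifs at h <;> omega

lemma colF_pos (g p : ℕ) : 1 ≤ colF g p := by
  unfold colF; split_ifs <;> omega

lemma main_A {g p q : ℕ} (hq : q < p) (hp : p ≤ 3*g)
    (h1 : slotF g p ≤ slotF g q + g) (h2 : slotF g q ≤ slotF g p + g) :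
    colF g q ≠ colF g p := by
  unfold slotF colF at *; split_ifs at * <;> omega

lemma main_B {g p c : ℕ} (hp : p ≤ 3*g) (h1 : 1 ≤ c) (h2 : c < colF g p) :
    witF g p c < p ∧ slotF g p ≤ slotF g (witF g p c) + g ∧
    slotF g (witF g p c) ≤ slotF g p + g ∧ colF g (witF g p c) = c := by
  simp only [slotF, colF, witF] at *
  split_ifs at * <;> omega

lemma col_surj {g c : ℕ} (h1 : 1 ≤ c) (h2 : c ≤ 2*g+1) :
    ∃ p, p ≤ 3*g ∧ colF g p = c := by
  refine ⟨if c ≤ g+1 then c-1 else g + 2*(c-g-1), ?_⟩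
  simp only [colF]; split_ifs <;> omega

/-- left endpoint of the interval at slot `s`. -/
noncomputable def posR (a : ℝ) (g s : ℕ) : ℝ := a + s / g

/-- the sequence of intervals. -/
noncomputable def xfun (g : ℕ) (a : ℝ) : Fin (3*g+1) → ℝ × ℝ :=
  fun i => (posR a g (slotF g i.1), posR a g (slotF g i.1) + 1)

lemma icc_inter_nonempty {u v : ℝ} :
    (Set.Icc u (u+1) ∩ Set.Icc v (v+1)).Nonempty ↔ (u ≤ v + 1 ∧ v ≤ u + 1) := by
  constructor
  · rintro ⟨t, ⟨h1, h2⟩, ⟨h3, h4⟩⟩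
    constructor <;> linarith
  · rintro ⟨h1, h2⟩
    exact ⟨max u v, ⟨le_max_left _ _, max_le (by linarith) h2⟩,
      ⟨le_max_right _ _, max_le h1 (by linarith)⟩⟩

lemma pos_le_iff {a : ℝ} {g s s' : ℕ} (hs : s ≤ 3*g) (hs' : s' ≤ 3*g) :
    posR a g s ≤ posR a g s' + 1 ↔ s ≤ s' + g := by
  rcases Nat.eq_zero_or_pos g with h | h
  · have h1 : s = 0 := by omega
    have h2 : s' = 0 := by omega
    subst h h1 h2
    simp [posR]
  · have hg : (0:ℝ) < (g:ℕ) := by exact_mod_cast h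
    unfold posR
    rw [show a + (s:ℝ)/g ≤ a + (s':ℝ)/g + 1 ↔ (s:ℝ)/g ≤ ((s':ℝ)+g)/g by
      rw [add_div, div_self (ne_of_gt hg)]; constructor <;> intro <;> linarith,
      div_le_div_iff_of_pos_right hg]
    constructor
    · intro hle
      exact_mod_cast hle
    · intro hle
      exact_mod_cast hle

lemma adj_iff {a : ℝ} {g s s' : ℕ} (hs : s ≤ 3*g) (hs' : s' ≤ 3*g) :
    (Set.Icc (posR a g s) (posR a g s + 1) ∩
      Set.Icc (posR a g s') (posR a g s' + 1)).Nonempty ↔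
    (s ≤ s' + g ∧ s' ≤ s + g) := by
  rw [icc_inter_nonempty, pos_le_iff hs hs', pos_le_iff hs' hs]

lemma aux_stable {n : ℕ} (x : Fin n → ℝ × ℝ) :
    ∀ m (j : Fin n), j.1 < m → firstFitAux x m j = firstFit x j := by
  intro m
  induction m with
  | zero => intro j h; omega
  | succ m ih =>
    intro j hj
    by_cases h : j.1 = m
    · rw [firstFit, h]
    · have hj' : j.1 < m := by omega
      rw [show firstFitAux x (m+1) j = firstFitAux x m j by
        simp [firstFitAux, h], ih j hj']

lemma color_eq (g : ℕ) (a : ℝ) : ∀ p : Fin (3*g+1),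
    firstFit (xfun g a) p = colF g p.1 := by
  have H : ∀ m, ∀ p : Fin (3*g+1), p.1 < m → firstFit (xfun g a) p = colF g p.1 := by
    intro m
    induction m with
    | zero => intro p h; omega
    | succ m ih =>
      intro p hp
      rcases Nat.lt_succ_iff_lt_or_eq.mp hp with h | h
      · exact ih p h
      have hpb : p.1 ≤ 3*g := by omega
      have key : ∀ j : Fin (3*g+1), j < p →
          firstFitAux (xfun g a) p.1 j = colF g j.1 := by
        intro j hj
        have hj' : j.1 < p.1 := hj
        exact (aux_stable (xfun g a) p.1 j hj').trans (ih j (by omega))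
      rw [firstFit]
      simp only [firstFitAux, eq_self_iff_true, if_true]
      have hset : {c : ℕ | 1 ≤ c ∧ ∀ j : Fin (3*g+1), j < p →
          (Set.Icc ((xfun g a) j).1 ((xfun g a) j).2 ∩
            Set.Icc ((xfun g a) p).1 ((xfun g a) p).2).Nonempty →
          firstFitAux (xfun g a) p.1 j ≠ c}
          = {c : ℕ | 1 ≤ c ∧ ∀ j : Fin (3*g+1), j < p →
          (Set.Icc ((xfun g a) j).1 ((xfun g a) j).2 ∩
            Set.Icc ((xfun g a) p).1 ((xfun g a) p).2).Nonempty →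
          colF g j.1 ≠ c} := by
        ext c
        simp only [Set.mem_setOf_eq]
        constructor <;> (rintro ⟨h1, h2⟩; refine ⟨h1, fun j hj hne => ?_⟩)
        · rw [← key j hj]; exact h2 j hj hne
        · rw [key j hj]; exact h2 j hj hne
      rw [hset]
      have hmem : colF g p.1 ∈ {c : ℕ | 1 ≤ c ∧ ∀ j : Fin (3*g+1), j < p →
          (Set.Icc ((xfun g a) j).1 ((xfun g a) j).2 ∩
            Set.Icc ((xfun g a) p).1 ((xfun g a) p).2).Nonempty →
          colF g j.1 ≠ c} := by
        refine ⟨colF_pos g p.1, fun j hj hne => ?_⟩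
        have hjb : j.1 ≤ 3*g := by omega
        have hadj := (adj_iff (a := a) (slotF_le hjb) (slotF_le hpb)).mp hne
        exact main_A hj hpb hadj.2 hadj.1
      refine le_antisymm (Nat.sInf_le hmem) (le_csInf ⟨_, hmem⟩ ?_)
      intro c hcS
      by_contra hcon
      push_neg at hcon
      obtain ⟨hc1, hc2⟩ := hcS
      obtain ⟨hw1, hw2, hw3, hw4⟩ := main_B hpb hc1 hcon
      refine hc2 ⟨witF g p.1 c, by omega⟩ hw1 ?_ hw4
      exact (adj_iff (a := a) (slotF_le (by omega)) (slotF_le hpb)).mpr ⟨hw3, hw2⟩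
  exact fun p => H (p.1 + 1) p (by omega)

end Stmt5Aux

open Stmt5Aux in
theorem stmt5 (k : ℕ) (hk : 1 ≤ k) (a : ℝ) :
    ∃ (n : ℕ) (x : Fin n → ℝ × ℝ),
      (∀ i, (x i).2 - (x i).1 = 1) ∧
      (∀ i, Set.Icc (x i).1 (x i).2 ⊆ Set.Icc a (a + 4)) ∧
      (∀ t : ℝ, {i : Fin n | t ∈ Set.Icc (x i).1 (x i).2}.ncard ≤ k) ∧
      2 * k - 1 ≤ (Set.range (firstFit x)).ncard := by
  set g : ℕ := k - 1 with hg
  have hkg : k = g + 1 := by omega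
  refine ⟨3*g+1, xfun g a, ?_, ?_, ?_, ?_⟩
  · intro i; simp [xfun]
  · intro i
    have hsb : slotF g i.1 ≤ 3*g := slotF_le (by omega)
    have hfrac : (0:ℝ) ≤ (slotF g i.1 : ℝ) / g ∧ (slotF g i.1 : ℝ) / g ≤ 3 := by
      rcases Nat.eq_zero_or_pos g with h | h
      · have : slotF g i.1 = 0 := by omega
        rw [this]; norm_num
      · have hgr : (0:ℝ) < (g:ℕ) := by exact_mod_cast h
        constructor
        · positivity
        · rw [div_le_iff₀ hgr]
          have : (slotF g i.1 : ℝ) ≤ 3 * g := by exact_mod_cast hsb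
          linarith
      -- done
    intro t ht
    simp only [xfun, posR, Set.mem_Icc] at ht ⊢
    obtain ⟨h1, h2⟩ := ht
    constructor <;> [linarith [hfrac.1]; linarith [hfrac.2]]
  · intro t
    rcases Nat.eq_zero_or_pos g with h0 | h0
    · -- g = 0 : only one interval
      have : {i : Fin (3*g+1) | t ∈ Set.Icc ((xfun g a) i).1 ((xfun g a) i).2}.ncard
          ≤ (Set.univ : Set (Fin (3*g+1))).ncard :=
        Set.ncard_le_ncard (Set.subset_univ _) Set.finite_univ
      have huniv : (Set.univ : Set (Fin (3*g+1))).ncard = 3*g+1 := by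
        simp [Set.ncard_univ]
      omega
    · have hgr : (0:ℝ) < (g:ℕ) := by exact_mod_cast h0
      set m : ℤ := ⌈(t - a) * g⌉ - g with hm
      have hmaps : ∀ i ∈ {i : Fin (3*g+1) | t ∈ Set.Icc ((xfun g a) i).1 ((xfun g a) i).2},
          ((slotF g i.1 : ℤ)) ∈ (↑(Finset.Icc m (m + g)) : Set ℤ) := by
        intro i hi
        simp only [Set.mem_setOf_eq, xfun, posR, Set.mem_Icc] at hi
        obtain ⟨h1, h2⟩ := hi
        simp only [Finset.coe_Icc, Set.mem_Icc]
        constructor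
        · -- m ≤ slot
          have : (t - a) * g ≤ (slotF g i.1 : ℝ) + g := by
            have hd : t - a ≤ (slotF g i.1 : ℝ) / g + 1 := by linarith
            have := mul_le_mul_of_nonneg_right hd (le_of_lt hgr)
            calc (t-a) * g ≤ ((slotF g i.1 : ℝ)/g + 1) * g := this
              _ = (slotF g i.1 : ℝ) + g := by field_simp
          have hceil : ⌈(t - a) * g⌉ ≤ (slotF g i.1 : ℤ) + g := by
            apply Int.ceil_le.mpr
            push_cast
            exact this
          omega
        · -- slot ≤ m + g
          have : (slotF g i.1 : ℝ) ≤ (t - a) * g := by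
            have hd : (slotF g i.1 : ℝ) / g ≤ t - a := by linarith
            have := mul_le_mul_of_nonneg_right hd (le_of_lt hgr)
            calc (slotF g i.1 : ℝ) = (slotF g i.1 : ℝ)/g * g := by field_simp
              _ ≤ (t - a) * g := this
          have : (slotF g i.1 : ℤ) ≤ ⌈(t - a) * g⌉ := by
            have h' : ((slotF g i.1 : ℤ) : ℝ) ≤ (⌈(t - a) * g⌉ : ℝ) :=
              le_trans (by push_cast; exact this) (Int.le_ceil _)
            exact_mod_cast h'
          omega
      have hinj : Set.InjOn (fun i : Fin (3*g+1) => (slotF g i.1 : ℤ))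
          {i : Fin (3*g+1) | t ∈ Set.Icc ((xfun g a) i).1 ((xfun g a) i).2} := by
        intro i1 _ i2 _ h
        have h' : slotF g i1.1 = slotF g i2.1 := Nat.cast_injective h
        have := slotF_inj (p := i1.1) (q := i2.1) (by omega) (by omega) h'
        exact Fin.ext this
      have hle := Set.ncard_le_ncard_of_injOn _ hmaps hinj (Finset.finite_toSet _)
      have hcard : (↑(Finset.Icc m (m + g)) : Set ℤ).ncard = g + 1 := by
        rw [Set.ncard_coe_finset, Int.card_Icc]
        omega
      omega
  · have hsub : (Set.Icc 1 (2*g+1) : Set ℕ) ⊆ Set.range (firstFit (xfun g a)) := by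
      intro c hc
      obtain ⟨hc1, hc2⟩ := hc
      obtain ⟨p, hp1, hp2⟩ := col_surj hc1 hc2
      exact ⟨⟨p, by omega⟩, (color_eq g a ⟨p, by omega⟩).trans hp2⟩
    have hfin : (Set.range (firstFit (xfun g a))).Finite := Set.finite_range _
    have := Set.ncard_le_ncard hsub hfin
    have hicc : (Set.Icc 1 (2*g+1) : Set ℕ).ncard = 2*g+1 := by
      rw [← Finset.coe_Icc, Set.ncard_coe_finset, Nat.card_Icc]
      omega
    omega
end

section
/- For every positive integer ω, every real number a, and every proper deterministic online coloring algorithm A with unknown representation, there exists a finite simple graph G with ordered vertex set such that: (1) G admits an interval representation in which every interval has length exactly 1 and is contained in [a, a+4]; (2) the clique number of G is at most ω; and (3) when G is presented to A vertex by vertex, A uses at least 2ω − 1 colors. -/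
/-- A deterministic online coloring algorithm with unknown representation:
it assigns to each finite simple graph on ordered vertex set `Fin (i+1)` a
color for the last vertex. -/
def OnlineAlg : Type := ∀ i : ℕ, SimpleGraph (Fin (i + 1)) → ℕ

/-- The coloring produced when a graph `G` on `Fin n` is presented to the
algorithm `A` vertex by vertex: vertex `i` is colored according to the
induced subgraph on the first `i+1` vertices. -/
def onlineColoring (A : OnlineAlg) {n : ℕ} (G : SimpleGraph (Fin n)) (i : Fin n) : ℕ :=
  A i.1 (G.comap (Fin.castLE i.isLt))

/-- The algorithm `A` is proper: on every presented graph, adjacent vertices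
receive distinct colors. -/
def IsProper (A : OnlineAlg) : Prop :=
  ∀ (n : ℕ) (G : SimpleGraph (Fin n)) (i j : Fin n),
    G.Adj i j → onlineColoring A G i ≠ onlineColoring A G j

namespace Stmt6
attribute [local instance] Classical.propDecidable

variable (ω : ℕ) (A : OnlineAlg)

def PG (Wp : ℕ) (t : ℕ) : SimpleGraph (Fin (t + 1)) where
  Adj u v := u ≠ v ∧ ((u : ℕ) < Wp ↔ (v : ℕ) < Wp)
  symm := ⟨fun _ _ h => ⟨h.1.symm, h.2.symm⟩⟩
  loopless := ⟨fun _ h => h.1 rfl⟩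

noncomputable def c1 (s : ℕ) : ℕ := A s (PG (ω - 1) s)
noncomputable def c2 (t : ℕ) : ℕ := A (ω - 1 + t) (PG (ω - 1) (ω - 1 + t))
def isJ (t : ℕ) : Prop := ∃ s, s < ω - 1 ∧ c1 ω A s = c2 ω A t
def mir (s : ℕ) : Prop := ∃ t, t < ω - 1 ∧ c2 ω A t = c1 ω A s
noncomputable def fc : ℕ := ((Finset.range (ω-1)).filter fun t => ¬ isJ ω A t).card
noncomputable def Jrank (t : ℕ) : ℕ :=
  ((Finset.range (ω-1)).filter fun t' => isJ ω A t' ∧ t' ≤ t).card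
noncomputable def Frank (t : ℕ) : ℕ :=
  ((Finset.range (ω-1)).filter fun t' => ¬ isJ ω A t' ∧ t' ≤ t).card
noncomputable def iot (t : ℕ) : ℕ :=
  if isJ ω A t then ω - Jrank ω A t else Frank ω A t
noncomputable def kap (s : ℕ) : ℕ :=
  if h : mir ω A s then iot ω A h.choose else ω
noncomputable def mz : ℕ := (ω - 1) - fc ω A
noncomputable def nn : ℕ := 2 * (ω - 1) + mz ω A + 1
noncomputable def q (v : ℕ) : ℤ :=
  if v < ω - 1 then 2 * kap ω A v
  else if v < 2 * (ω - 1) then 8 * ω + 2 * iot ω A (v - (ω - 1)) + 1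
  else if v < 2 * (ω - 1) + mz ω A then 4 * ω + 2 * (fc ω A + 1 + (v - 2 * (ω - 1)))
  else 6 * ω

noncomputable def G : SimpleGraph (Fin (nn ω A)) where
  Adj u v := u ≠ v ∧ |q ω A u.1 - q ω A v.1| ≤ 4 * ω
  symm := ⟨fun _ _ h => ⟨h.1.symm, by rw [abs_sub_comm]; exact h.2⟩⟩
  loopless := ⟨fun _ h => h.1 rfl⟩

-- ## counting lemmas

lemma fc_le : fc ω A ≤ ω - 1 := by
  have := Finset.card_filter_le (Finset.range (ω-1)) (fun t => ¬ isJ ω A t)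
  simpa [fc] using this

lemma cardJ : ((Finset.range (ω-1)).filter fun t => isJ ω A t).card = (ω - 1) - fc ω A := by
  have h := Finset.card_filter_add_card_filter_not
    (s := Finset.range (ω-1)) (p := fun t => isJ ω A t)
  simp only [Finset.card_range] at h
  have h2 : fc ω A ≤ ω - 1 := fc_le ω A
  unfold fc at *
  omega

lemma Jrank_bounds {t : ℕ} (ht : t < ω - 1) (hJ : isJ ω A t) :
    1 ≤ Jrank ω A t ∧ Jrank ω A t ≤ (ω - 1) - fc ω A := by
  constructor
  · have : t ∈ (Finset.range (ω-1)).filter (fun t' => isJ ω A t' ∧ t' ≤ t) := by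
      simp [ht, hJ]
    exact Finset.card_pos.mpr ⟨t, this⟩
  · rw [← cardJ ω A]
    apply Finset.card_le_card
    intro x hx
    simp only [Finset.mem_filter, Finset.mem_range] at hx ⊢
    exact ⟨hx.1, hx.2.1⟩

lemma Frank_bounds {t : ℕ} (ht : t < ω - 1) (hJ : ¬ isJ ω A t) :
    1 ≤ Frank ω A t ∧ Frank ω A t ≤ fc ω A := by
  constructor
  · have : t ∈ (Finset.range (ω-1)).filter (fun t' => ¬ isJ ω A t' ∧ t' ≤ t) := by
      simp [ht, hJ]
    exact Finset.card_pos.mpr ⟨t, this⟩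
  · apply Finset.card_le_card
    intro x hx
    simp only [Finset.mem_filter, Finset.mem_range] at hx ⊢
    exact ⟨hx.1, hx.2.1⟩

lemma iot_bounds (hω : 1 ≤ ω) {t : ℕ} (ht : t < ω - 1) :
    1 ≤ iot ω A t ∧ iot ω A t ≤ ω - 1 ∧
    (isJ ω A t → fc ω A + 1 ≤ iot ω A t) ∧ (¬ isJ ω A t → iot ω A t ≤ fc ω A) := by
  have h2 := fc_le ω A
  by_cases hJ : isJ ω A t
  · have hi : iot ω A t = ω - Jrank ω A t := by unfold iot; rw [if_pos hJ]
    have h1 := Jrank_bounds ω A ht hJ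
    exact ⟨by omega, by omega, fun _ => by omega, fun h => absurd hJ h⟩
  · have hi : iot ω A t = Frank ω A t := by unfold iot; rw [if_neg hJ]
    have h1 := Frank_bounds ω A ht hJ
    exact ⟨by omega, by omega, fun h => absurd h hJ, fun _ => by omega⟩

lemma Jrank_lt {s t : ℕ} (hs : isJ ω A s) (hst : s < t) (ht : t < ω - 1) (hJ : isJ ω A t) :
    Jrank ω A s < Jrank ω A t := by
  apply Finset.card_lt_card
  constructor
  · intro x hx
    simp only [Finset.mem_filter, Finset.mem_range] at hx ⊢
    exact ⟨hx.1, hx.2.1, by omega⟩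
  · intro hsub
    have : t ∈ (Finset.range (ω-1)).filter (fun t' => isJ ω A t' ∧ t' ≤ t) := by
      simp [ht, hJ]
    have ht' := hsub this
    simp only [Finset.mem_filter, Finset.mem_range] at ht'
    omega

lemma Frank_lt {s t : ℕ} (hs : ¬ isJ ω A s) (hst : s < t) (ht : t < ω - 1) (hJ : ¬ isJ ω A t) :
    Frank ω A s < Frank ω A t := by
  apply Finset.card_lt_card
  constructor
  · intro x hx
    simp only [Finset.mem_filter, Finset.mem_range] at hx ⊢
    exact ⟨hx.1, hx.2.1, by omega⟩
  · intro hsub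
    have : t ∈ (Finset.range (ω-1)).filter (fun t' => ¬ isJ ω A t' ∧ t' ≤ t) := by
      simp [ht, hJ]
    have ht' := hsub this
    simp only [Finset.mem_filter, Finset.mem_range] at ht'
    omega

lemma iot_inj (hω : 1 ≤ ω) {s t : ℕ} (hsW : s < ω - 1) (htW : t < ω - 1)
    (h : iot ω A s = iot ω A t) : s = t := by
  by_contra hne
  by_cases hJs : isJ ω A s <;> by_cases hJt : isJ ω A t
  · have hb1 := Jrank_bounds ω A hsW hJs
    have hb2 := Jrank_bounds ω A htW hJt
    have hfc := fc_le ω A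
    have hJr : Jrank ω A s = Jrank ω A t := by
      unfold iot at h; simp only [hJs, hJt, if_true] at h; omega
    rcases Nat.lt_or_ge s t with hlt | hge
    · exact absurd hJr (Nat.ne_of_lt (Jrank_lt ω A hJs hlt htW hJt))
    · have : t < s := by omega
      exact absurd hJr.symm (Nat.ne_of_lt (Jrank_lt ω A hJt this hsW hJs))
  · have h1 := (iot_bounds ω A hω hsW).2.2.1 hJs
    have h2 := (iot_bounds ω A hω htW).2.2.2 hJt
    omega
  · have h1 := (iot_bounds ω A hω hsW).2.2.2 hJs
    have h2 := (iot_bounds ω A hω htW).2.2.1 hJt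
    omega
  · have hFr : Frank ω A s = Frank ω A t := by
      unfold iot at h; simp only [hJs, hJt, if_false] at h; exact h
    rcases Nat.lt_or_ge s t with hlt | hge
    · exact absurd hFr (Nat.ne_of_lt (Frank_lt ω A hJs hlt htW hJt))
    · have : t < s := by omega
      exact absurd hFr.symm (Nat.ne_of_lt (Frank_lt ω A hJt this hsW hJs))

lemma kap_spec {s : ℕ} (h : mir ω A s) :
    ∃ t, t < ω - 1 ∧ c2 ω A t = c1 ω A s ∧ iot ω A t = kap ω A s := by
  refine ⟨h.choose, h.choose_spec.1, h.choose_spec.2, ?_⟩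
  unfold kap
  rw [dif_pos h]

lemma kap_bounds (hω : 1 ≤ ω) (s : ℕ) : 1 ≤ kap ω A s ∧ kap ω A s ≤ ω ∧
    (mir ω A s → kap ω A s ≤ ω - 1) ∧ (¬ mir ω A s → kap ω A s = ω) := by
  by_cases h : mir ω A s
  · obtain ⟨t, htW, _, hiot⟩ := kap_spec ω A h
    have := iot_bounds ω A hω htW
    rw [← hiot]
    exact ⟨by omega, by omega, fun _ => by omega, fun h' => absurd h h'⟩
  · unfold kap
    rw [dif_neg h]
    exact ⟨hω, le_refl _, fun h' => absurd h' h, fun _ => rfl⟩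

-- ## q class lemmas

lemma q_bait {x : ℕ} (hx : x < ω - 1) : q ω A x = 2 * kap ω A x := by
  unfold q; rw [if_pos hx]

lemma q_d {x : ℕ} (h1 : ¬ x < ω - 1) (h2 : x < 2 * (ω - 1)) :
    q ω A x = 8 * ω + 2 * iot ω A (x - (ω - 1)) + 1 := by
  unfold q; rw [if_neg h1, if_pos h2]

lemma q_z {x : ℕ} (h1 : ¬ x < 2 * (ω - 1)) (h2 : x < 2 * (ω - 1) + mz ω A) :
    q ω A x = 4 * ω + 2 * (fc ω A + 1 + (x - 2 * (ω - 1))) := by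
  unfold q; rw [if_neg (by omega), if_neg h1, if_pos h2]

lemma q_w {x : ℕ} (h1 : ¬ x < 2 * (ω - 1) + mz ω A) : q ω A x = 6 * ω := by
  unfold q; rw [if_neg (by omega), if_neg (by omega), if_neg h1]

-- ## prefix lemma

lemma adjPrefix (hω : 1 ≤ ω) {x y : ℕ} (hx : x < 2 * (ω - 1)) (hy : y < 2 * (ω - 1)) :
    |q ω A x - q ω A y| ≤ 4 * ω ↔ ((x < ω - 1) ↔ (y < ω - 1)) := by
  rw [abs_le]
  by_cases h1 : x < ω - 1 <;> by_cases h2 : y < ω - 1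
  · have b1 := kap_bounds ω A hω x
    have b2 := kap_bounds ω A hω y
    rw [q_bait ω A h1, q_bait ω A h2]
    constructor
    · intro _; exact ⟨fun _ => h2, fun _ => h1⟩
    · intro _; omega
  · have b1 := kap_bounds ω A hω x
    have b2 := iot_bounds ω A hω (t := y - (ω - 1)) (by omega)
    rw [q_bait ω A h1, q_d ω A h2 hy]
    constructor
    · intro h; omega
    · intro h; exact absurd (h.mp h1) h2
  · have b1 := iot_bounds ω A hω (t := x - (ω - 1)) (by omega)
    have b2 := kap_bounds ω A hω y
    rw [q_d ω A h1 hx, q_bait ω A h2]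
    constructor
    · intro h; omega
    · intro h; exact absurd (h.mpr h2) h1
  · have b1 := iot_bounds ω A hω (t := x - (ω - 1)) (by omega)
    have b2 := iot_bounds ω A hω (t := y - (ω - 1)) (by omega)
    rw [q_d ω A h1 hx, q_d ω A h2 hy]
    constructor
    · intro _; exact ⟨fun hh => absurd hh h1, fun hh => absurd hh h2⟩
    · intro _; omega

lemma prefix_eq (hω : 1 ≤ ω) (v : Fin (nn ω A)) (hv : v.1 < 2 * (ω - 1)) :
    (G ω A).comap (Fin.castLE v.isLt) = PG (ω - 1) v.1 := by
  ext u u'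
  show ((Fin.castLE _ u : Fin (nn ω A)) ≠ Fin.castLE _ u'
      ∧ |q ω A (Fin.castLE v.isLt u).1 - q ω A (Fin.castLE v.isLt u').1| ≤ 4 * ω)
      ↔ (u ≠ u' ∧ ((u : ℕ) < ω - 1 ↔ (u' : ℕ) < ω - 1))
  have hu : (u : ℕ) < 2 * (ω - 1) := by have := u.isLt; omega
  have hu' : (u' : ℕ) < 2 * (ω - 1) := by have := u'.isLt; omega
  simp only [Fin.coe_castLE]
  rw [adjPrefix ω A hω hu hu']
  constructor
  · rintro ⟨h1, h2⟩
    refine ⟨fun hh => h1 (by rw [hh]), h2⟩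
  · rintro ⟨h1, h2⟩
    refine ⟨fun hh => h1 ?_, h2⟩
    have : (u : ℕ) = u' := by simpa using congrArg Fin.val hh
    exact Fin.ext this

lemma colorBait (hω : 1 ≤ ω) {s : ℕ} (hs : s < ω - 1) (hsn : s < nn ω A) :
    onlineColoring A (G ω A) ⟨s, hsn⟩ = c1 ω A s := by
  unfold onlineColoring
  rw [prefix_eq ω A hω ⟨s, hsn⟩ (by simpa using by omega : (⟨s, hsn⟩ : Fin (nn ω A)).1 < 2 * (ω - 1))]
  rfl

lemma colorD (hω : 1 ≤ ω) {t : ℕ} (ht : t < ω - 1) (hsn : (ω - 1) + t < nn ω A) :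
    onlineColoring A (G ω A) ⟨(ω - 1) + t, hsn⟩ = c2 ω A t := by
  unfold onlineColoring
  rw [prefix_eq ω A hω ⟨(ω - 1) + t, hsn⟩ (by simpa using by omega)]
  rfl

-- ## injectivity of colors on cliques

lemma c1_inj (hω : 1 ≤ ω) (hA : IsProper A) {s s' : ℕ} (hs : s < ω - 1) (hs' : s' < ω - 1)
    (hne : s ≠ s') : c1 ω A s ≠ c1 ω A s' := by
  have hfc := fc_le ω A
  have hsn : s < nn ω A := by unfold nn mz; omega
  have hsn' : s' < nn ω A := by unfold nn mz; omega
  have hadj : (G ω A).Adj ⟨s, hsn⟩ ⟨s', hsn'⟩ := by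
    refine ⟨fun hh => hne (by simpa using congrArg Fin.val hh), ?_⟩
    have b1 := kap_bounds ω A hω s
    have b2 := kap_bounds ω A hω s'
    show |q ω A s - q ω A s'| ≤ 4 * ω
    rw [q_bait ω A hs, q_bait ω A hs', abs_le]
    constructor <;> push_cast <;> omega
  have := hA _ (G ω A) _ _ hadj
  rwa [colorBait ω A hω hs hsn, colorBait ω A hω hs' hsn'] at this

lemma c2_inj (hω : 1 ≤ ω) (hA : IsProper A) {t t' : ℕ} (ht : t < ω - 1) (ht' : t' < ω - 1)
    (hne : t ≠ t') : c2 ω A t ≠ c2 ω A t' := by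
  have hfc := fc_le ω A
  have hsn : (ω - 1) + t < nn ω A := by unfold nn mz; omega
  have hsn' : (ω - 1) + t' < nn ω A := by unfold nn mz; omega
  have hadj : (G ω A).Adj ⟨(ω - 1) + t, hsn⟩ ⟨(ω - 1) + t', hsn'⟩ := by
    refine ⟨fun hh => hne (by simpa using congrArg Fin.val hh), ?_⟩
    have b1 := iot_bounds ω A hω (t := t) ht
    have b2 := iot_bounds ω A hω (t := t') ht'
    show |q ω A ((ω - 1) + t) - q ω A ((ω - 1) + t')| ≤ 4 * ω
    rw [q_d ω A (by omega) (by omega), q_d ω A (by omega) (by omega), abs_le]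
    have e1 : (ω - 1) + t - (ω - 1) = t := by omega
    have e2 : (ω - 1) + t' - (ω - 1) = t' := by omega
    rw [e1, e2]
    constructor <;> push_cast <;> omega
  have := hA _ (G ω A) _ _ hadj
  rwa [colorD ω A hω ht hsn, colorD ω A hω ht' hsn'] at this

lemma kap_inj (hω : 1 ≤ ω) (hA : IsProper A) {s s' : ℕ} (hs : s < ω - 1) (hs' : s' < ω - 1)
    (hm : mir ω A s) (hm' : mir ω A s') (h : kap ω A s = kap ω A s') : s = s' := by
  obtain ⟨t, htW, hc, hi⟩ := kap_spec ω A hm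
  obtain ⟨t', htW', hc', hi'⟩ := kap_spec ω A hm'
  have : t = t' := iot_inj ω A hω htW htW' (by rw [hi, hi', h])
  by_contra hne
  exact c1_inj ω A hω hA hs hs' hne (by rw [← hc, ← hc', this])

-- ## junk counting

noncomputable def JunkRank (s : ℕ) : ℕ :=
  ((Finset.range (ω-1)).filter fun s' => ¬ mir ω A s' ∧ s' ≤ s).card

lemma card_mir (hω : 1 ≤ ω) (hA : IsProper A) :
    ((Finset.range (ω-1)).filter fun s => mir ω A s).card = (ω - 1) - fc ω A := by
  rw [← cardJ ω A]
  apply Finset.card_bij (fun s hs => (by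
      simp only [Finset.mem_filter, Finset.mem_range] at hs
      exact hs.2 : mir ω A s).choose)
  · intro s hs
    simp only [Finset.mem_filter, Finset.mem_range] at hs ⊢
    have spec := (hs.2 : mir ω A s).choose_spec
    exact ⟨spec.1, s, hs.1, spec.2.symm⟩
  · intro s1 h1 s2 h2 heq
    simp only [Finset.mem_filter, Finset.mem_range] at h1 h2
    have spec1 := (h1.2 : mir ω A s1).choose_spec
    have spec2 := (h2.2 : mir ω A s2).choose_spec
    by_contra hne
    apply c1_inj ω A hω hA h1.1 h2.1 hne
    rw [← spec1.2, ← spec2.2, heq]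
  · intro t ht
    simp only [Finset.mem_filter, Finset.mem_range] at ht
    obtain ⟨s, hsW, hcs⟩ := ht.2
    have hmir : mir ω A s := ⟨t, ht.1, hcs.symm⟩
    have hmem : s ∈ (Finset.range (ω-1)).filter fun s => mir ω A s := by
      simp only [Finset.mem_filter, Finset.mem_range]; exact ⟨hsW, hmir⟩
    refine ⟨s, hmem, ?_⟩
    have spec := (by simp only [Finset.mem_filter, Finset.mem_range] at hmem; exact hmem.2
        : mir ω A s).choose_spec
    by_contra hne
    exact c2_inj ω A hω hA spec.1 ht.1 hne (by rw [spec.2, hcs])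

lemma card_junk (hω : 1 ≤ ω) (hA : IsProper A) :
    ((Finset.range (ω-1)).filter fun s => ¬ mir ω A s).card = fc ω A := by
  have h := Finset.card_filter_add_card_filter_not
    (s := Finset.range (ω-1)) (p := fun s => mir ω A s)
  simp only [Finset.card_range] at h
  have h2 := card_mir ω A hω hA
  have h3 := fc_le ω A
  omega

lemma JunkRank_bounds (hω : 1 ≤ ω) (hA : IsProper A) {s : ℕ} (hs : s < ω - 1)
    (hm : ¬ mir ω A s) : 1 ≤ JunkRank ω A s ∧ JunkRank ω A s ≤ fc ω A := by
  constructor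
  · have : s ∈ (Finset.range (ω-1)).filter (fun s' => ¬ mir ω A s' ∧ s' ≤ s) := by
      simp [hs, hm]
    exact Finset.card_pos.mpr ⟨s, this⟩
  · rw [← card_junk ω A hω hA]
    apply Finset.card_le_card
    intro x hx
    simp only [Finset.mem_filter, Finset.mem_range] at hx ⊢
    exact ⟨hx.1, hx.2.1⟩

lemma JunkRank_lt {s t : ℕ} (hs : ¬ mir ω A s) (hst : s < t) (ht : t < ω - 1)
    (hJ : ¬ mir ω A t) : JunkRank ω A s < JunkRank ω A t := by
  apply Finset.card_lt_card
  constructor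
  · intro x hx
    simp only [Finset.mem_filter, Finset.mem_range] at hx ⊢
    exact ⟨hx.1, hx.2.1, by omega⟩
  · intro hsub
    have : t ∈ (Finset.range (ω-1)).filter (fun t' => ¬ mir ω A t' ∧ t' ≤ t) := by
      simp [ht, hJ]
    have ht' := hsub this
    simp only [Finset.mem_filter, Finset.mem_range] at ht'
    omega

-- ## track coloring

noncomputable def track (v : ℕ) : ℕ :=
  if v < ω - 1 then (if mir ω A v then kap ω A v + 1 else JunkRank ω A v)
  else if v < 2 * (ω - 1) then iot ω A (v - (ω - 1))
  else if v < 2 * (ω - 1) + mz ω A then fc ω A + 1 + (v - 2 * (ω - 1))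
  else ω

lemma track_bait_mir {x : ℕ} (hx : x < ω - 1) (hm : mir ω A x) :
    track ω A x = kap ω A x + 1 := by unfold track; rw [if_pos hx, if_pos hm]

lemma track_bait_junk {x : ℕ} (hx : x < ω - 1) (hm : ¬ mir ω A x) :
    track ω A x = JunkRank ω A x := by unfold track; rw [if_pos hx, if_neg hm]

lemma track_d {x : ℕ} (h1 : ¬ x < ω - 1) (h2 : x < 2 * (ω - 1)) :
    track ω A x = iot ω A (x - (ω - 1)) := by unfold track; rw [if_neg h1, if_pos h2]

lemma track_z {x : ℕ} (h1 : ¬ x < 2 * (ω - 1)) (h2 : x < 2 * (ω - 1) + mz ω A) :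
    track ω A x = fc ω A + 1 + (x - 2 * (ω - 1)) := by
  unfold track; rw [if_neg (by omega), if_neg h1, if_pos h2]

lemma track_w {x : ℕ} (h1 : ¬ x < 2 * (ω - 1) + mz ω A) : track ω A x = ω := by
  unfold track; rw [if_neg (by omega), if_neg (by omega), if_neg h1]

lemma kap_mir_lb (hω : 1 ≤ ω) {s : ℕ} (hs : s < ω - 1) (hm : mir ω A s) :
    fc ω A + 1 ≤ kap ω A s := by
  obtain ⟨t, htW, hc, hi⟩ := kap_spec ω A hm
  have hJ : isJ ω A t := ⟨s, hs, hc.symm⟩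
  have := (iot_bounds ω A hω htW).2.2.1 hJ
  omega

lemma track_bounds (hω : 1 ≤ ω) (hA : IsProper A) {v : ℕ} (hv : v < nn ω A) :
    1 ≤ track ω A v ∧ track ω A v ≤ ω := by
  have hfc := fc_le ω A
  have hmz : mz ω A = (ω - 1) - fc ω A := rfl
  by_cases h1 : v < ω - 1
  · by_cases hm : mir ω A v
    · rw [track_bait_mir ω A h1 hm]
      have := (kap_bounds ω A hω v).2.2.1 hm
      have := (kap_bounds ω A hω v).1
      omega
    · rw [track_bait_junk ω A h1 hm]
      have := JunkRank_bounds ω A hω hA h1 hm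
      omega
  · by_cases h2 : v < 2 * (ω - 1)
    · rw [track_d ω A h1 h2]
      have := iot_bounds ω A hω (t := v - (ω - 1)) (by omega)
      omega
    · by_cases h3 : v < 2 * (ω - 1) + mz ω A
      · rw [track_z ω A h2 h3]
        omega
      · rw [track_w ω A h3]
        omega

lemma track_proper (hω : 1 ≤ ω) (hA : IsProper A) {x y : ℕ}
    (hx : x < nn ω A) (hy : y < nn ω A) (hne : x ≠ y)
    (hq : |q ω A x - q ω A y| ≤ 4 * ω) : track ω A x ≠ track ω A y := by
  have hfc := fc_le ω A
  have hmz : mz ω A = (ω - 1) - fc ω A := rfl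
  have hnn : nn ω A = 2 * (ω - 1) + mz ω A + 1 := rfl
  rw [abs_le] at hq
  by_cases a1 : x < ω - 1 <;> by_cases a2 : y < ω - 1
  -- bait / bait
  · rw [q_bait ω A a1, q_bait ω A a2] at hq
    by_cases m1 : mir ω A x <;> by_cases m2 : mir ω A y
    · rw [track_bait_mir ω A a1 m1, track_bait_mir ω A a2 m2]
      intro h
      exact hne (kap_inj ω A hω hA a1 a2 m1 m2 (by omega))
    · rw [track_bait_mir ω A a1 m1, track_bait_junk ω A a2 m2]
      have h1 := kap_mir_lb ω A hω a1 m1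
      have h2 := JunkRank_bounds ω A hω hA a2 m2
      omega
    · rw [track_bait_junk ω A a1 m1, track_bait_mir ω A a2 m2]
      have h1 := kap_mir_lb ω A hω a2 m2
      have h2 := JunkRank_bounds ω A hω hA a1 m1
      omega
    · rw [track_bait_junk ω A a1 m1, track_bait_junk ω A a2 m2]
      intro h
      rcases Nat.lt_or_ge x y with hlt | hge
      · exact absurd h (Nat.ne_of_lt (JunkRank_lt ω A m1 hlt a2 m2))
      · have : y < x := by omega
        exact absurd h.symm (Nat.ne_of_lt (JunkRank_lt ω A m2 this a1 m1))
  all_goals try skip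
  -- bait / non-bait
  · by_cases b2 : y < 2 * (ω - 1)
    · -- bait/d: impossible
      exfalso
      rw [q_bait ω A a1, q_d ω A a2 b2] at hq
      have k1 := kap_bounds ω A hω x
      have i2 := iot_bounds ω A hω (t := y - (ω - 1)) (by omega)
      omega
    · by_cases b3 : y < 2 * (ω - 1) + mz ω A
      · -- bait/z
        rw [q_bait ω A a1, q_z ω A b2 b3] at hq
        by_cases m1 : mir ω A x
        · rw [track_bait_mir ω A a1 m1, track_z ω A b2 b3]
          have := (kap_bounds ω A hω x).2.2.1 m1
          omega
        · rw [track_bait_junk ω A a1 m1, track_z ω A b2 b3]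
          have := JunkRank_bounds ω A hω hA a1 m1
          omega
      · -- bait/w
        rw [q_bait ω A a1, q_w ω A b3] at hq
        by_cases m1 : mir ω A x
        · exfalso
          have := (kap_bounds ω A hω x).2.2.1 m1
          omega
        · rw [track_bait_junk ω A a1 m1, track_w ω A b3]
          have := JunkRank_bounds ω A hω hA a1 m1
          omega
  · -- non-bait / bait : symmetric
    by_cases b1 : x < 2 * (ω - 1)
    · exfalso
      rw [q_d ω A a1 b1, q_bait ω A a2] at hq
      have k1 := kap_bounds ω A hω y
      have i2 := iot_bounds ω A hω (t := x - (ω - 1)) (by omega)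
      omega
    · by_cases b3 : x < 2 * (ω - 1) + mz ω A
      · rw [q_z ω A b1 b3, q_bait ω A a2] at hq
        by_cases m2 : mir ω A y
        · rw [track_bait_mir ω A a2 m2, track_z ω A b1 b3]
          have := (kap_bounds ω A hω y).2.2.1 m2
          omega
        · rw [track_bait_junk ω A a2 m2, track_z ω A b1 b3]
          have := JunkRank_bounds ω A hω hA a2 m2
          omega
      · -- w / bait
        rw [q_w ω A b3, q_bait ω A a2] at hq
        by_cases m2 : mir ω A y
        · exfalso
          have := (kap_bounds ω A hω y).2.2.1 m2
          omega
        · rw [track_bait_junk ω A a2 m2, track_w ω A b3]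
          have := JunkRank_bounds ω A hω hA a2 m2
          omega
  · -- non-bait / non-bait
    by_cases b1 : x < 2 * (ω - 1) <;> by_cases b2 : y < 2 * (ω - 1)
    · -- d/d
      rw [track_d ω A a1 b1, track_d ω A a2 b2]
      intro h
      have := iot_inj ω A hω (s := x - (ω - 1)) (t := y - (ω - 1)) (by omega) (by omega) h
      omega
    · by_cases c2 : y < 2 * (ω - 1) + mz ω A
      · -- d/z
        rw [q_d ω A a1 b1, q_z ω A b2 c2] at hq
        rw [track_d ω A a1 b1, track_z ω A b2 c2]
        have := iot_bounds ω A hω (t := x - (ω - 1)) (by omega)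
        omega
      · -- d/w
        rw [track_d ω A a1 b1, track_w ω A c2]
        have := iot_bounds ω A hω (t := x - (ω - 1)) (by omega)
        omega
    · by_cases c1 : x < 2 * (ω - 1) + mz ω A
      · -- z/d
        rw [q_z ω A b1 c1, q_d ω A a2 b2] at hq
        rw [track_z ω A b1 c1, track_d ω A a2 b2]
        have := iot_bounds ω A hω (t := y - (ω - 1)) (by omega)
        omega
      · -- w/d
        rw [track_w ω A c1, track_d ω A a2 b2]
        have := iot_bounds ω A hω (t := y - (ω - 1)) (by omega)
        omega
    · by_cases c1 : x < 2 * (ω - 1) + mz ω A <;> by_cases c2 : y < 2 * (ω - 1) + mz ω A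
      · -- z/z
        rw [track_z ω A b1 c1, track_z ω A b2 c2]
        omega
      · -- z/w
        rw [track_z ω A b1 c1, track_w ω A c2]
        omega
      · -- w/z
        rw [track_w ω A c1, track_z ω A b2 c2]
        omega
      · -- w/w
        exfalso
        exact hne (by omega)

-- ## clique-freeness

lemma G_cliquefree (hω : 1 ≤ ω) (hA : IsProper A) : (G ω A).CliqueFree (ω + 1) := by
  have hcol : (G ω A).Colorable ω := by
    refine ⟨SimpleGraph.Coloring.mk
      (fun v => ⟨track ω A v.1 - 1, by
        have := track_bounds ω A hω hA v.isLt
        omega⟩) ?_⟩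
    intro u v hadj h
    have hb1 := track_bounds ω A hω hA u.isLt
    have hb2 := track_bounds ω A hω hA v.isLt
    have hval : track ω A u.1 - 1 = track ω A v.1 - 1 := congrArg Fin.val h
    have hne : u.1 ≠ v.1 := fun hh => hadj.1 (Fin.ext hh)
    exact track_proper ω A hω hA u.isLt v.isLt hne hadj.2 (by omega)
  exact hcol.cliqueFree (Nat.lt_succ_self ω)

-- ## color count

lemma adj_mk {x y : ℕ} (hx : x < nn ω A) (hy : y < nn ω A) (hne : x ≠ y)
    (h : |q ω A x - q ω A y| ≤ 4 * ω) : (G ω A).Adj ⟨x, hx⟩ ⟨y, hy⟩ :=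
  ⟨fun hh => hne (congrArg Fin.val hh), h⟩

lemma w_lt : 2 * (ω - 1) + mz ω A < nn ω A := by unfold nn; omega

lemma z_lt {r : ℕ} (hr : r < mz ω A) : 2 * (ω - 1) + r < nn ω A := by unfold nn; omega

noncomputable def zcol (r : ℕ) : ℕ :=
  if h : 2 * (ω - 1) + r < nn ω A then onlineColoring A (G ω A) ⟨2 * (ω - 1) + r, h⟩ else 0

noncomputable def wcol : ℕ := onlineColoring A (G ω A) ⟨2 * (ω - 1) + mz ω A, w_lt ω A⟩

lemma zcol_eq {r : ℕ} (hr : r < mz ω A) :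
    zcol ω A r = onlineColoring A (G ω A) ⟨2 * (ω - 1) + r, z_lt ω A hr⟩ := by
  unfold zcol; rw [dif_pos (z_lt ω A hr)]

lemma q_z' {r : ℕ} (hr : r < mz ω A) :
    q ω A (2 * (ω - 1) + r) = 4 * ω + 2 * (fc ω A + 1 + r) := by
  have hmz : mz ω A = (ω - 1) - fc ω A := rfl
  have hfc := fc_le ω A
  rw [q_z ω A (by omega) (by omega)]
  congr 2
  omega

lemma zz_ne (hω : 1 ≤ ω) (hA : IsProper A) {r r' : ℕ} (hr : r < mz ω A) (hr' : r' < mz ω A)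
    (hne : r ≠ r') : zcol ω A r ≠ zcol ω A r' := by
  have hfc := fc_le ω A
  have hmz : mz ω A = (ω - 1) - fc ω A := rfl
  rw [zcol_eq ω A hr, zcol_eq ω A hr']
  apply hA
  apply adj_mk ω A _ _ (by omega)
  rw [q_z' ω A hr, q_z' ω A hr', abs_le]
  constructor <;> omega

lemma zw_ne (hω : 1 ≤ ω) (hA : IsProper A) {r : ℕ} (hr : r < mz ω A) :
    zcol ω A r ≠ wcol ω A := by
  have hfc := fc_le ω A
  have hmz : mz ω A = (ω - 1) - fc ω A := rfl
  rw [zcol_eq ω A hr]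
  apply hA
  apply adj_mk ω A _ _ (by omega)
  rw [q_z' ω A hr, q_w ω A (by omega), abs_le]
  constructor <;> omega

lemma c2_w_ne (hω : 1 ≤ ω) (hA : IsProper A) {t : ℕ} (ht : t < ω - 1) :
    c2 ω A t ≠ wcol ω A := by
  have hfc := fc_le ω A
  have hmz : mz ω A = (ω - 1) - fc ω A := rfl
  have hdn : (ω - 1) + t < nn ω A := by unfold nn; omega
  rw [← colorD ω A hω ht hdn]
  apply hA
  apply adj_mk ω A _ _ (by omega)
  have hi := iot_bounds ω A hω (t := t) ht
  rw [q_d ω A (by omega) (by omega), q_w ω A (by omega), abs_le]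
  have e1 : (ω - 1) + t - (ω - 1) = t := by omega
  rw [e1]
  constructor <;> omega

lemma c2fresh_z_ne (hω : 1 ≤ ω) (hA : IsProper A) {t r : ℕ} (ht : t < ω - 1)
    (hf : ¬ isJ ω A t) (hr : r < mz ω A) : c2 ω A t ≠ zcol ω A r := by
  have hfc := fc_le ω A
  have hmz : mz ω A = (ω - 1) - fc ω A := rfl
  have hdn : (ω - 1) + t < nn ω A := by unfold nn; omega
  rw [← colorD ω A hω ht hdn, zcol_eq ω A hr]
  apply hA
  apply adj_mk ω A _ _ (by omega)
  have hi := iot_bounds ω A hω (t := t) ht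
  have hif := (iot_bounds ω A hω (t := t) ht).2.2.2 hf
  rw [q_d ω A (by omega) (by omega), q_z' ω A hr, abs_le]
  have e1 : (ω - 1) + t - (ω - 1) = t := by omega
  rw [e1]
  constructor <;> omega

lemma c1_z_ne (hω : 1 ≤ ω) (hA : IsProper A) {s r : ℕ} (hs : s < ω - 1)
    (hr : r < mz ω A) : c1 ω A s ≠ zcol ω A r := by
  have hfc := fc_le ω A
  have hmz : mz ω A = (ω - 1) - fc ω A := rfl
  have hsn : s < nn ω A := by unfold nn; omega
  by_cases hm : mir ω A s
  · obtain ⟨t, htW, hc, hi⟩ := kap_spec ω A hm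
    have hkb := kap_bounds ω A hω s
    have hio := iot_bounds ω A hω (t := t) htW
    by_cases hcase : fc ω A + 1 + r ≤ kap ω A s
    · -- adjacent bait-z
      rw [← colorBait ω A hω hs hsn, zcol_eq ω A hr]
      apply hA
      apply adj_mk ω A _ _ (by omega)
      rw [q_bait ω A hs, q_z' ω A hr, abs_le]
      have hk2 := hkb.2.2.1 hm
      constructor <;> omega
    · -- chain via the d-vertex t
      have hdn : (ω - 1) + t < nn ω A := by unfold nn; omega
      have hzd : onlineColoring A (G ω A) ⟨2 * (ω - 1) + r, z_lt ω A hr⟩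
          ≠ onlineColoring A (G ω A) ⟨(ω - 1) + t, hdn⟩ := by
        apply hA
        apply adj_mk ω A _ _ (by omega)
        rw [q_z' ω A hr, q_d ω A (by omega) (by omega), abs_le]
        have e1 : (ω - 1) + t - (ω - 1) = t := by omega
        rw [e1, hi]
        constructor <;> omega
      rw [zcol_eq ω A hr]
      rw [colorD ω A hω htW hdn] at hzd
      intro h
      exact hzd ((hc.trans h).symm)
  · -- junk bait: adjacent to z
    have hk := (kap_bounds ω A hω s).2.2.2 hm
    rw [← colorBait ω A hω hs hsn, zcol_eq ω A hr]
    apply hA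
    apply adj_mk ω A _ _ (by omega)
    rw [q_bait ω A hs, q_z' ω A hr, hk, abs_le]
    constructor <;> omega

lemma c1_w_ne (hω : 1 ≤ ω) (hA : IsProper A) {s : ℕ} (hs : s < ω - 1) :
    c1 ω A s ≠ wcol ω A := by
  have hfc := fc_le ω A
  have hmz : mz ω A = (ω - 1) - fc ω A := rfl
  have hsn : s < nn ω A := by unfold nn; omega
  by_cases hm : mir ω A s
  · obtain ⟨t, htW, hc, hi⟩ := kap_spec ω A hm
    intro h
    exact c2_w_ne ω A hω hA htW (by rw [hc, h])
  · have hk := (kap_bounds ω A hω s).2.2.2 hm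
    rw [← colorBait ω A hω hs hsn]
    apply hA
    apply adj_mk ω A _ _ (by omega)
    rw [q_bait ω A hs, q_w ω A (by omega), hk, abs_le]
    constructor <;> omega

-- ## the count

lemma count (hω : 1 ≤ ω) (hA : IsProper A) :
    2 * ω - 1 ≤ (Set.range (onlineColoring A (G ω A))).ncard := by
  classical
  have hfc := fc_le ω A
  have hmz : mz ω A = (ω - 1) - fc ω A := rfl
  set S1 : Finset ℕ := (Finset.range (ω-1)).image (c1 ω A) with hS1
  set S2 : Finset ℕ := (((Finset.range (ω-1)).filter fun t => ¬ isJ ω A t).image (c2 ω A)) with hS2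
  set S3 : Finset ℕ := (Finset.range (mz ω A)).image (zcol ω A) with hS3
  set S4 : Finset ℕ := {wcol ω A} with hS4
  have h1 : S1.card = ω - 1 := by
    rw [hS1, Finset.card_image_of_injOn, Finset.card_range]
    intro s hs s' hs' h
    simp only [Finset.coe_range, Set.mem_Iio] at hs hs'
    by_contra hne
    exact c1_inj ω A hω hA hs hs' hne h
  have h2 : S2.card = fc ω A := by
    rw [hS2, Finset.card_image_of_injOn]
    · rfl
    · intro s hs s' hs' h
      simp only [Finset.coe_filter, Finset.mem_range, Set.mem_setOf_eq] at hs hs'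
      by_contra hne
      exact c2_inj ω A hω hA hs.1 hs'.1 hne h
  have h3 : S3.card = mz ω A := by
    rw [hS3, Finset.card_image_of_injOn, Finset.card_range]
    intro s hs s' hs' h
    simp only [Finset.coe_range, Set.mem_Iio] at hs hs'
    by_contra hne
    exact zz_ne ω A hω hA hs hs' hne h
  have h4 : S4.card = 1 := rfl
  -- memberships characterizations
  have memS1 : ∀ x ∈ S1, ∃ s, s < ω - 1 ∧ c1 ω A s = x := by
    intro x hx
    rw [hS1] at hx
    simp only [Finset.mem_image, Finset.mem_range] at hx
    obtain ⟨s, hs, he⟩ := hx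
    exact ⟨s, hs, he⟩
  have memS2 : ∀ x ∈ S2, ∃ t, t < ω - 1 ∧ ¬ isJ ω A t ∧ c2 ω A t = x := by
    intro x hx
    rw [hS2] at hx
    simp only [Finset.mem_image, Finset.mem_filter, Finset.mem_range] at hx
    obtain ⟨t, ⟨ht, hf⟩, he⟩ := hx
    exact ⟨t, ht, hf, he⟩
  have memS3 : ∀ x ∈ S3, ∃ r, r < mz ω A ∧ zcol ω A r = x := by
    intro x hx
    rw [hS3] at hx
    simp only [Finset.mem_image, Finset.mem_range] at hx
    exact hx
  -- disjointness
  have d12 : Disjoint S1 S2 := by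
    rw [Finset.disjoint_left]
    intro x hx1 hx2
    obtain ⟨s, hs, he1⟩ := memS1 x hx1
    obtain ⟨t, ht, hf, he2⟩ := memS2 x hx2
    exact hf ⟨s, hs, by rw [he1, he2]⟩
  have d13 : Disjoint S1 S3 := by
    rw [Finset.disjoint_left]
    intro x hx1 hx3
    obtain ⟨s, hs, he1⟩ := memS1 x hx1
    obtain ⟨r, hr, he3⟩ := memS3 x hx3
    exact c1_z_ne ω A hω hA hs hr (by rw [he1, he3])
  have d23 : Disjoint S2 S3 := by
    rw [Finset.disjoint_left]
    intro x hx2 hx3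
    obtain ⟨t, ht, hf, he2⟩ := memS2 x hx2
    obtain ⟨r, hr, he3⟩ := memS3 x hx3
    exact c2fresh_z_ne ω A hω hA ht hf hr (by rw [he2, he3])
  have d14 : Disjoint S1 S4 := by
    rw [Finset.disjoint_left]
    intro x hx1 hx4
    obtain ⟨s, hs, he1⟩ := memS1 x hx1
    rw [hS4, Finset.mem_singleton] at hx4
    exact c1_w_ne ω A hω hA hs (by rw [he1, hx4])
  have d24 : Disjoint S2 S4 := by
    rw [Finset.disjoint_left]
    intro x hx2 hx4
    obtain ⟨t, ht, hf, he2⟩ := memS2 x hx2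
    rw [hS4, Finset.mem_singleton] at hx4
    exact c2_w_ne ω A hω hA ht (by rw [he2, hx4])
  have d34 : Disjoint S3 S4 := by
    rw [Finset.disjoint_left]
    intro x hx3 hx4
    obtain ⟨r, hr, he3⟩ := memS3 x hx3
    rw [hS4, Finset.mem_singleton] at hx4
    exact zw_ne ω A hω hA hr (by rw [he3, hx4])
  -- total card
  have hcard : (S1 ∪ S2 ∪ S3 ∪ S4).card = 2 * ω - 1 := by
    rw [Finset.card_union_of_disjoint, Finset.card_union_of_disjoint,
        Finset.card_union_of_disjoint, h1, h2, h3, h4]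
    · omega
    · exact d12
    · rw [Finset.disjoint_union_left]; exact ⟨d13, d23⟩
    · rw [Finset.disjoint_union_left, Finset.disjoint_union_left]
      exact ⟨⟨d14, d24⟩, d34⟩
  -- union within the range
  have hsub : ↑(S1 ∪ S2 ∪ S3 ∪ S4) ⊆ Set.range (onlineColoring A (G ω A)) := by
    intro x hx
    simp only [Finset.coe_union, Set.mem_union, Finset.mem_coe] at hx
    rcases hx with ((hx | hx) | hx) | hx
    · obtain ⟨s, hs, he⟩ := memS1 x hx
      have hsn : s < nn ω A := by unfold nn; omega
      exact ⟨⟨s, hsn⟩, by rw [colorBait ω A hω hs hsn, he]⟩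
    · obtain ⟨t, ht, _, he⟩ := memS2 x hx
      have hdn : (ω - 1) + t < nn ω A := by unfold nn; omega
      exact ⟨⟨(ω - 1) + t, hdn⟩, by rw [colorD ω A hω ht hdn, he]⟩
    · obtain ⟨r, hr, he⟩ := memS3 x hx
      exact ⟨⟨2 * (ω - 1) + r, z_lt ω A hr⟩, by rw [← zcol_eq ω A hr, he]⟩
    · rw [hS4, Finset.mem_singleton] at hx
      exact ⟨⟨2 * (ω - 1) + mz ω A, w_lt ω A⟩, hx.symm⟩
  have hle := Set.ncard_le_ncard hsub (Set.finite_range _)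
  rw [Set.ncard_coe_finset, hcard] at hle
  exact hle

-- ## geometric bounds

lemma q_bounds (hω : 1 ≤ ω) (v : ℕ) : 0 ≤ q ω A v ∧ q ω A v ≤ 12 * ω := by
  have hfc := fc_le ω A
  have hmz : mz ω A = (ω - 1) - fc ω A := rfl
  by_cases h1 : v < ω - 1
  · rw [q_bait ω A h1]
    have := kap_bounds ω A hω v
    omega
  · by_cases h2 : v < 2 * (ω - 1)
    · rw [q_d ω A h1 h2]
      have := iot_bounds ω A hω (t := v - (ω - 1)) (by omega)
      omega
    · by_cases h3 : v < 2 * (ω - 1) + mz ω A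
      · rw [q_z ω A h2 h3]
        omega
      · rw [q_w ω A h3]
        omega

end Stmt6

theorem stmt6 (ω : ℕ) (hω : 1 ≤ ω) (a : ℝ) (A : OnlineAlg) (hA : IsProper A) :
    ∃ (n : ℕ) (G : SimpleGraph (Fin n)) (f : Fin n → ℝ × ℝ),
      (∀ v, (f v).2 - (f v).1 = 1) ∧
      (∀ v, Set.Icc (f v).1 (f v).2 ⊆ Set.Icc a (a + 4)) ∧
      (∀ u v : Fin n, u ≠ v →
        (G.Adj u v ↔ (Set.Icc (f u).1 (f u).2 ∩ Set.Icc (f v).1 (f v).2).Nonempty)) ∧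
      G.CliqueFree (ω + 1) ∧
      2 * ω - 1 ≤ (Set.range (onlineColoring A G)).ncard := by
  classical
  have hω' : (1 : ℝ) ≤ (ω : ℝ) := by exact_mod_cast hω
  have h4 : (0 : ℝ) < 4 * (ω : ℝ) := by linarith
  refine ⟨Stmt6.nn ω A, Stmt6.G ω A,
    fun v => (a + (Stmt6.q ω A v.1 : ℝ) / (4 * (ω : ℝ)),
              a + (Stmt6.q ω A v.1 : ℝ) / (4 * (ω : ℝ)) + 1),
    ?_, ?_, ?_, Stmt6.G_cliquefree ω A hω hA, Stmt6.count ω A hω hA⟩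
  · intro v
    ring
  · intro v x hx
    simp only [Set.mem_Icc] at hx ⊢
    have hq := Stmt6.q_bounds ω A hω v.1
    have hdiv0 : (0 : ℝ) ≤ (Stmt6.q ω A v.1 : ℝ) / (4 * (ω : ℝ)) := by
      apply div_nonneg _ (le_of_lt h4)
      exact_mod_cast hq.1
    have hdiv3 : (Stmt6.q ω A v.1 : ℝ) / (4 * (ω : ℝ)) ≤ 3 := by
      rw [div_le_iff₀ h4]
      have : (Stmt6.q ω A v.1 : ℝ) ≤ 12 * (ω : ℝ) := by exact_mod_cast hq.2
      linarith
    constructor <;> [linarith [hx.1]; linarith [hx.2]]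
  · intro u v huv
    change (Stmt6.G ω A).Adj u v ↔
      (Set.Icc (a + (Stmt6.q ω A u.1 : ℝ) / (4 * (ω : ℝ)))
               (a + (Stmt6.q ω A u.1 : ℝ) / (4 * (ω : ℝ)) + 1) ∩
       Set.Icc (a + (Stmt6.q ω A v.1 : ℝ) / (4 * (ω : ℝ)))
               (a + (Stmt6.q ω A v.1 : ℝ) / (4 * (ω : ℝ)) + 1)).Nonempty
    have hsub : ∀ m k : ℤ, (m : ℝ) / (4 * (ω : ℝ)) - (k : ℝ) / (4 * (ω : ℝ))
        = ((m - k : ℤ) : ℝ) / (4 * (ω : ℝ)) := by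
      intro m k
      rw [div_sub_div_same]
      push_cast
      ring
    have hone : ∀ m k : ℤ, ((m - k : ℤ) : ℝ) / (4 * (ω : ℝ)) ≤ 1 ↔ m - k ≤ 4 * (ω : ℤ) := by
      intro m k
      rw [div_le_one h4]
      constructor
      · intro h; exact_mod_cast h
      · intro h; exact_mod_cast h
    rw [Set.Icc_inter_Icc, Set.nonempty_Icc, le_inf_iff, sup_le_iff, sup_le_iff]
    constructor
    · rintro ⟨-, habs⟩
      rw [abs_le] at habs
      have d1 : (Stmt6.q ω A u.1 : ℝ) / (4 * (ω : ℝ)) - (Stmt6.q ω A v.1 : ℝ) / (4 * (ω : ℝ)) ≤ 1 := by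
        rw [hsub, hone]; omega
      have d2 : (Stmt6.q ω A v.1 : ℝ) / (4 * (ω : ℝ)) - (Stmt6.q ω A u.1 : ℝ) / (4 * (ω : ℝ)) ≤ 1 := by
        rw [hsub, hone]; omega
      exact ⟨⟨by linarith, by linarith⟩, by linarith, by linarith⟩
    · rintro ⟨⟨hb1, hb2⟩, hb3, hb4⟩
      refine ⟨huv, ?_⟩
      rw [abs_le]
      have d1 : Stmt6.q ω A u.1 - Stmt6.q ω A v.1 ≤ 4 * (ω : ℤ) := by
        rw [← hone, ← hsub]
        linarith
      have d2 : Stmt6.q ω A v.1 - Stmt6.q ω A u.1 ≤ 4 * (ω : ℤ) := by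
        rw [← hone, ← hsub]
        linarith
      omega
end
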